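/- arXiv:2503.07398 — 4 statements merged into one kernel-verified Lean document; each statement's English description precedes it below -/
import Mathlib

section
/- Let 𝒳 be an LFCM space and C⁰, C¹ coarse 𝒳-modules. Suppose there exists an invertible approximable operator t : C⁰ → C¹. Then for any infinite cardinal κ, and also for κ = 1, the κ-domains of C⁰ and C¹ are asymptotically equivalent: dom_κ(C⁰) ≍ dom_κ(C¹). -/
noncomputable section

open scoped ENNReal

/-! ## Relations -/

/-- Composition of relations: for `R ⊆ Z × Y` and `S ⊆ Y × X`,
`RelComp R S = {(z,x) | ∃ y, (z,y) ∈ R ∧ (y,x) ∈ S}`. -/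
def RelComp {X Y Z : Type} (R : Set (Z × Y)) (S : Set (Y × X)) : Set (Z × X) :=
  {p | ∃ y, (p.1, y) ∈ R ∧ (y, p.2) ∈ S}

/-- Transpose of a relation. -/
def RelTrans {X Y : Type} (R : Set (Y × X)) : Set (X × Y) := {p | (p.2, p.1) ∈ R}

/-! ## Coarse spaces -/

/-- A coarse structure on a set `X`. -/
structure CoarseSpace (X : Type) where
  entourages : Set (Set (X × X))
  diagonal_mem : {p : X × X | p.1 = p.2} ∈ entourages
  mem_of_subset : ∀ {E F : Set (X × X)}, E ∈ entourages → F ⊆ E → F ∈ entourages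
  union_mem : ∀ {E F : Set (X × X)}, E ∈ entourages → F ∈ entourages → E ∪ F ∈ entourages
  transpose_mem : ∀ {E : Set (X × X)}, E ∈ entourages → RelTrans E ∈ entourages
  comp_mem : ∀ {E F : Set (X × X)}, E ∈ entourages → F ∈ entourages → RelComp E F ∈ entourages

namespace CoarseSpace

variable {X Y : Type}

/-- A gauge: a symmetric entourage containing the diagonal. -/
def IsGauge (C : CoarseSpace X) (E : Set (X × X)) : Prop :=
  E ∈ C.entourages ∧ RelTrans E = E ∧ {p : X × X | p.1 = p.2} ⊆ E

/-- The `E`-neighbourhood `E[A]` of a set `A`. -/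
def nbhd (E : Set (X × X)) (A : Set X) : Set X := {x | ∃ a ∈ A, (x, a) ∈ E}

/-- A set is bounded if `A × A` is contained in some entourage. -/
def IsBounded (C : CoarseSpace X) (A : Set X) : Prop := ∃ E ∈ C.entourages, A ×ˢ A ⊆ E

/-- `A ≺ B` : `A` is subordinate to `B`. -/
def Subordinate (C : CoarseSpace X) (A B : Set X) : Prop := ∃ E ∈ C.entourages, A ⊆ nbhd E B

/-- `A ≍ B` : asymptotic equivalence of subsets. -/
def Asymptotic (C : CoarseSpace X) (A B : Set X) : Prop :=
  C.Subordinate A B ∧ C.Subordinate B A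

/-- A coarse map between coarse spaces. -/
def IsCoarseMap (CX : CoarseSpace X) (CY : CoarseSpace Y) (f : X → Y) : Prop :=
  ∀ E ∈ CX.entourages, (fun p : X × X => (f p.1, f p.2)) '' E ∈ CY.entourages

/-- Two maps are close. -/
def Close (CX : CoarseSpace X) (CY : CoarseSpace Y) (f g : X → Y) : Prop :=
  ∀ E ∈ CX.entourages, (fun p : X × X => (f p.1, g p.2)) '' E ∈ CY.entourages

/-- A coarse equivalence (of maps). -/
def IsCoarseEquivMap (CX : CoarseSpace X) (CY : CoarseSpace Y) (f : X → Y) : Prop :=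
  IsCoarseMap CX CY f ∧ ∃ g : Y → X, IsCoarseMap CY CX g ∧
    Close CY CY (f ∘ g) id ∧ Close CX CX (g ∘ f) id

/-- A coarse embedding: a coarse map which is in addition expansive (equivalently, a coarse
equivalence onto its image with the subspace coarse structure). -/
def IsCoarseEmbedding (CX : CoarseSpace X) (CY : CoarseSpace Y) (f : X → Y) : Prop :=
  IsCoarseMap CX CY f ∧
    ∀ F ∈ CY.entourages, {p : X × X | (f p.1, f p.2) ∈ F} ∈ CX.entourages

/-- A coarse structure is countably generated if it is the smallest coarse structure
containing some countable family of subsets of `X × X`. -/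
def IsCountablyGenerated (C : CoarseSpace X) : Prop :=
  ∃ G : Set (Set (X × X)), G.Countable ∧ G ⊆ C.entourages ∧
    ∀ C' : CoarseSpace X, G ⊆ C'.entourages → C.entourages ⊆ C'.entourages

end CoarseSpace

/-- Subordination of relations `R₁, R₂ ⊆ Y × X` with respect to the product coarse structure. -/
def RelSub {X Y : Type} (CX : CoarseSpace X) (CY : CoarseSpace Y)
    (R₁ R₂ : Set (Y × X)) : Prop :=
  ∃ F ∈ CY.entourages, ∃ E ∈ CX.entourages,
    ∀ p ∈ R₁, ∃ q ∈ R₂, (p.1, q.1) ∈ F ∧ (p.2, q.2) ∈ E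

/-- Asymptotic equivalence of relations `R₁, R₂ ⊆ Y × X`. -/
def RelAsymp {X Y : Type} (CX : CoarseSpace X) (CY : CoarseSpace Y)
    (R₁ R₂ : Set (Y × X)) : Prop :=
  RelSub CX CY R₁ R₂ ∧ RelSub CX CY R₂ R₁

/-! ## LFCM spaces -/

/-- A discrete partition of a coarse space endowed with a Boolean algebra `meas` of subsets:
a measurable, locally finite, controlled partition `P` such that a set is measurable iff its
intersection with every block is measurable. -/
structure IsDiscretePartition {X : Type} (C : CoarseSpace X) (meas : Set (Set X))
    (P : Set (Set X)) : Prop where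
  nonempty : ∀ A ∈ P, A.Nonempty
  pairwiseDisjoint : ∀ A ∈ P, ∀ B ∈ P, A ≠ B → Disjoint A B
  covers : ⋃₀ P = Set.univ
  measurable : P ⊆ meas
  locallyFinite : ∀ B : Set X, C.IsBounded B → {A | A ∈ P ∧ (A ∩ B).Nonempty}.Finite
  controlled : ∃ E, C.IsGauge E ∧ ∀ A ∈ P, A ×ˢ A ⊆ E
  meas_iff : ∀ B : Set X, B ∈ meas ↔ ∀ A ∈ P, B ∩ A ∈ meas

/-- A locally finite coarse measurable (LFCM) space: a coarse space together with a Boolean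
algebra of subsets admitting a discrete partition (a chosen one is part of the data). -/
structure LFCMSpace (X : Type) where
  coarse : CoarseSpace X
  meas : Set (Set X)
  empty_mem : ∅ ∈ meas
  compl_mem : ∀ {A : Set X}, A ∈ meas → Aᶜ ∈ meas
  union_mem : ∀ {A B : Set X}, A ∈ meas → B ∈ meas → A ∪ B ∈ meas
  partition : Set (Set X)
  isPartition : IsDiscretePartition coarse meas partition

namespace LFCMSpace

variable {X Y : Type}

/-- The discreteness gauge `E_disc = ⊔_{A ∈ P} A × A` of an LFCM space. -/
def disc (𝒳 : LFCMSpace X) : Set (X × X) := ⋃ A ∈ 𝒳.partition, A ×ˢ A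

/-- A discreteness gauge: a gauge bounding the blocks of some discrete partition. -/
def IsDiscretenessGauge (𝒳 : LFCMSpace X) (E : Set (X × X)) : Prop :=
  𝒳.coarse.IsGauge E ∧
    ∃ P, IsDiscretePartition 𝒳.coarse 𝒳.meas P ∧ ∀ A ∈ P, A ×ˢ A ⊆ E

end LFCMSpace

/-- A coarse measurable map between LFCM spaces. -/
def IsCoarseMeasurableMap {X Y : Type} (𝒳 : LFCMSpace X) (𝒴 : LFCMSpace Y) (f : X → Y) : Prop :=
  CoarseSpace.IsCoarseMap 𝒳.coarse 𝒴.coarse f ∧ ∀ B ∈ 𝒴.meas, f ⁻¹' B ∈ 𝒳.meas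

/-! ## Coarse geometric modules -/

/-- A coarse geometric module over an LFCM space `𝒳`: a representation of the Boolean algebra
of measurable sets by orthogonal projections on a complex Hilbert space, nondegenerate on
bounded sets. -/
structure CoarseModule {X : Type} (𝒳 : LFCMSpace X) (H : Type) [NormedAddCommGroup H]
    [InnerProductSpace ℂ H] [CompleteSpace H] where
  proj : Set X → (H →L[ℂ] H)
  proj_empty : proj ∅ = 0
  proj_selfAdjoint : ∀ A ∈ 𝒳.meas, IsSelfAdjoint (proj A)
  proj_inter : ∀ {A B : Set X}, A ∈ 𝒳.meas → B ∈ 𝒳.meas → proj (A ∩ B) = proj A ∘L proj B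
  proj_union : ∀ {A B : Set X}, A ∈ 𝒳.meas → B ∈ 𝒳.meas → Disjoint A B →
      proj (A ∪ B) = proj A + proj B
  nondeg : Dense (↑(Submodule.span ℂ
      (⋃ A ∈ {A | A ∈ 𝒳.meas ∧ 𝒳.coarse.IsBounded A}, Set.range (proj A))) : Set H)

variable {X Y Z : Type}
variable {H₀ H₁ H₂ H₃ : Type}

/-- The support of a bounded operator between Hilbert spaces carrying representations
`pX`, `pY` of the measurable sets of LFCM spaces `𝒳` (source) and `𝒴` (target). -/
def opSupp [NormedAddCommGroup H₁] [InnerProductSpace ℂ H₁]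
    [NormedAddCommGroup H₂] [InnerProductSpace ℂ H₂]
    (𝒳 : LFCMSpace X) (𝒴 : LFCMSpace Y)
    (pX : Set X → (H₁ →L[ℂ] H₁)) (pY : Set Y → (H₂ →L[ℂ] H₂))
    (t : H₁ →L[ℂ] H₂) : Set (Y × X) :=
  ⋃₀ {S | ∃ B A, S = B ×ˢ A ∧ B ∈ 𝒴.meas ∧ B ×ˢ B ⊆ 𝒴.disc ∧
      A ∈ 𝒳.meas ∧ A ×ˢ A ⊆ 𝒳.disc ∧ pY B ∘L t ∘L pX A ≠ 0}

/-- Controlled propagation of an operator between modules over the same LFCM space. -/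
def HasControlledPropagation [NormedAddCommGroup H₁] [InnerProductSpace ℂ H₁]
    [NormedAddCommGroup H₂] [InnerProductSpace ℂ H₂]
    (𝒳 : LFCMSpace X) (pX : Set X → (H₁ →L[ℂ] H₁)) (pY : Set X → (H₂ →L[ℂ] H₂))
    (t : H₁ →L[ℂ] H₂) : Prop :=
  opSupp 𝒳 𝒳 pX pY t ∈ 𝒳.coarse.entourages

/-- Approximable operators: norm-limits of controlled propagation operators. -/
def Approximable [NormedAddCommGroup H₁] [InnerProductSpace ℂ H₁]
    [NormedAddCommGroup H₂] [InnerProductSpace ℂ H₂]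
    (𝒳 : LFCMSpace X) (pX : Set X → (H₁ →L[ℂ] H₁)) (pY : Set X → (H₂ →L[ℂ] H₂))
    (t : H₁ →L[ℂ] H₂) : Prop :=
  ∀ ε : ℝ, 0 < ε → ∃ s : H₁ →L[ℂ] H₂, HasControlledPropagation 𝒳 pX pY s ∧ ‖t - s‖ ≤ ε

/-- The rank (Hilbert dimension of the range) of an operator. -/
def projRank {H : Type} [NormedAddCommGroup H] [InnerProductSpace ℂ H]
    (p : H →L[ℂ] H) : Cardinal :=
  LinearMap.rank (p : H →ₗ[ℂ] H)

/-- The `κ`-domain of a coarse module, computed with respect to an arbitrary gauge `E`. -/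
def domKappaAt {X : Type} {H : Type} [NormedAddCommGroup H] [InnerProductSpace ℂ H]
    [CompleteSpace H] (𝒳 : LFCMSpace X) (M : CoarseModule 𝒳 H) (E : Set (X × X))
    (κ : Cardinal) : Set X :=
  ⋃₀ {A | A ∈ 𝒳.meas ∧ A ×ˢ A ⊆ E ∧ κ ≤ projRank (M.proj A)}

/-- The `κ`-domain of a coarse module (with respect to the discreteness gauge). -/
def domKappa {X : Type} {H : Type} [NormedAddCommGroup H] [InnerProductSpace ℂ H]
    [CompleteSpace H] (𝒳 : LFCMSpace X) (M : CoarseModule 𝒳 H) (κ : Cardinal) : Set X :=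
  domKappaAt 𝒳 M 𝒳.disc κ

/-- A coarse module is faithful if its faithfulness domain is asymptotic to the whole space. -/
def IsFaithfulMod {X : Type} {H : Type} [NormedAddCommGroup H] [InnerProductSpace ℂ H]
    [CompleteSpace H] (𝒳 : LFCMSpace X) (M : CoarseModule 𝒳 H) : Prop :=
  𝒳.coarse.Asymptotic (domKappa 𝒳 M 1) Set.univ

/-- A coarse module is ample if its ampleness domain is asymptotic to the whole space. -/
def IsAmpleMod {X : Type} {H : Type} [NormedAddCommGroup H] [InnerProductSpace ℂ H]
    [CompleteSpace H] (𝒳 : LFCMSpace X) (M : CoarseModule 𝒳 H) : Prop :=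
  𝒳.coarse.Asymptotic (domKappa 𝒳 M Cardinal.aleph0) Set.univ

/-- The approximate relation `f^T_{δ,F,E}` of a bounded operator. -/
def approxRel [NormedAddCommGroup H₁] [InnerProductSpace ℂ H₁]
    [NormedAddCommGroup H₂] [InnerProductSpace ℂ H₂]
    (𝒳 : LFCMSpace X) (𝒴 : LFCMSpace Y)
    (pX : Set X → (H₁ →L[ℂ] H₁)) (pY : Set Y → (H₂ →L[ℂ] H₂))
    (T : H₁ →L[ℂ] H₂) (δ : ℝ) (F : Set (Y × Y)) (E : Set (X × X)) : Set (Y × X) :=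
  ⋃₀ {S | ∃ B A, S = B ×ˢ A ∧ B ∈ 𝒴.meas ∧ B ×ˢ B ⊆ F ∧
      A ∈ 𝒳.meas ∧ A ×ˢ A ⊆ E ∧ δ < ‖pY B ∘L T ∘L pX A‖}

/-- A unitary operator between Hilbert spaces. -/
def IsUnitaryOp [NormedAddCommGroup H₁] [InnerProductSpace ℂ H₁] [CompleteSpace H₁]
    [NormedAddCommGroup H₂] [InnerProductSpace ℂ H₂] [CompleteSpace H₂]
    (U : H₁ →L[ℂ] H₂) : Prop :=
  ContinuousLinearMap.adjoint U ∘L U = ContinuousLinearMap.id ℂ H₁ ∧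
    U ∘L ContinuousLinearMap.adjoint U = ContinuousLinearMap.id ℂ H₂

/-- A central unitary of the C*-algebra of approximable operators on a coarse module. -/
def IsCentralUnitary {X : Type} {H : Type} [NormedAddCommGroup H] [InnerProductSpace ℂ H]
    [CompleteSpace H] (𝒳 : LFCMSpace X) (M : CoarseModule 𝒳 H) (u : H →L[ℂ] H) : Prop :=
  Approximable 𝒳 M.proj M.proj u ∧ IsUnitaryOp u ∧
    ∀ t : H →L[ℂ] H, Approximable 𝒳 M.proj M.proj t → u ∘L t = t ∘L u

/-- Equivalence of operators modulo central unitaries. -/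
def CongruentModCentral {X : Type} [NormedAddCommGroup H₁] [InnerProductSpace ℂ H₁]
    [CompleteSpace H₁] [NormedAddCommGroup H₂] [InnerProductSpace ℂ H₂] [CompleteSpace H₂]
    (𝒳 : LFCMSpace X) (C : CoarseModule 𝒳 H₁) (D : CoarseModule 𝒳 H₂)
    (t s : H₁ →L[ℂ] H₂) : Prop :=
  ∃ u v, IsCentralUnitary 𝒳 C u ∧ IsCentralUnitary 𝒳 D v ∧ t = v ∘L s ∘L u

/-! ## Direct sums of modules -/

/-- The direct sum `T ⊕ S` of two operators, on the `ℓ²`-product of Hilbert spaces. -/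
def prodOp [NormedAddCommGroup H₀] [InnerProductSpace ℂ H₀]
    [NormedAddCommGroup H₁] [InnerProductSpace ℂ H₁]
    [NormedAddCommGroup H₂] [InnerProductSpace ℂ H₂]
    [NormedAddCommGroup H₃] [InnerProductSpace ℂ H₃]
    (T : H₀ →L[ℂ] H₂) (S : H₁ →L[ℂ] H₃) :
    WithLp 2 (H₀ × H₁) →L[ℂ] WithLp 2 (H₂ × H₃) :=
  (WithLp.prodContinuousLinearEquiv 2 ℂ H₂ H₃).symm.toContinuousLinearMap ∘L
    (T.prodMap S) ∘L (WithLp.prodContinuousLinearEquiv 2 ℂ H₀ H₁).toContinuousLinearMap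

/-- The canonical inclusion `H₀ → H₀ ⊕ H₁`. -/
def inlOp (H₀ H₁ : Type) [NormedAddCommGroup H₀] [InnerProductSpace ℂ H₀]
    [NormedAddCommGroup H₁] [InnerProductSpace ℂ H₁] :
    H₀ →L[ℂ] WithLp 2 (H₀ × H₁) :=
  (WithLp.prodContinuousLinearEquiv 2 ℂ H₀ H₁).symm.toContinuousLinearMap ∘L
    ContinuousLinearMap.inl ℂ H₀ H₁

/-- The canonical inclusion `H₁ → H₀ ⊕ H₁`. -/
def inrOp (H₀ H₁ : Type) [NormedAddCommGroup H₀] [InnerProductSpace ℂ H₀]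
    [NormedAddCommGroup H₁] [InnerProductSpace ℂ H₁] :
    H₁ →L[ℂ] WithLp 2 (H₀ × H₁) :=
  (WithLp.prodContinuousLinearEquiv 2 ℂ H₀ H₁).symm.toContinuousLinearMap ∘L
    ContinuousLinearMap.inr ℂ H₀ H₁

/-- The canonical projection `H₀ ⊕ H₁ → H₀`. -/
def fstOp (H₀ H₁ : Type) [NormedAddCommGroup H₀] [InnerProductSpace ℂ H₀]
    [NormedAddCommGroup H₁] [InnerProductSpace ℂ H₁] :
    WithLp 2 (H₀ × H₁) →L[ℂ] H₀ :=
  ContinuousLinearMap.fst ℂ H₀ H₁ ∘L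
    (WithLp.prodContinuousLinearEquiv 2 ℂ H₀ H₁).toContinuousLinearMap

/-- The canonical projection `H₀ ⊕ H₁ → H₁`. -/
def sndOp (H₀ H₁ : Type) [NormedAddCommGroup H₀] [InnerProductSpace ℂ H₀]
    [NormedAddCommGroup H₁] [InnerProductSpace ℂ H₁] :
    WithLp 2 (H₀ × H₁) →L[ℂ] H₁ :=
  ContinuousLinearMap.snd ℂ H₀ H₁ ∘L
    (WithLp.prodContinuousLinearEquiv 2 ℂ H₀ H₁).toContinuousLinearMap

/-- `M` is the direct sum of the coarse modules `C₀` and `C₁`. -/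
def IsDirectSum {X : Type} [NormedAddCommGroup H₀] [InnerProductSpace ℂ H₀] [CompleteSpace H₀]
    [NormedAddCommGroup H₁] [InnerProductSpace ℂ H₁] [CompleteSpace H₁]
    (𝒳 : LFCMSpace X) (C₀ : CoarseModule 𝒳 H₀) (C₁ : CoarseModule 𝒳 H₁)
    (M : CoarseModule 𝒳 (WithLp 2 (H₀ × H₁))) : Prop :=
  ∀ A : Set X, M.proj A = prodOp (C₀.proj A) (C₁.proj A)

/-! ## Bundled modules and *-functors -/

/-- A coarse module over `𝒳` bundled together with its Hilbert space; the objects of the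
approximable category `𝒜(𝒳)`. -/
structure BundledModule {X : Type} (𝒳 : LFCMSpace X) where
  H : Type
  [instNorm : NormedAddCommGroup H]
  [instInner : InnerProductSpace ℂ H]
  [instComplete : CompleteSpace H]
  mod : CoarseModule 𝒳 H

attribute [instance] BundledModule.instNorm BundledModule.instInner BundledModule.instComplete

/-- A *-functor `𝒜(𝒳) → 𝒜(𝒴)` between approximable categories: a map on objects together
with a ℂ-linear, multiplicative, adjoint-preserving map on approximable operators. -/
structure StarFunctor {X Y : Type} (𝒳 : LFCMSpace X) (𝒴 : LFCMSpace Y) where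
  obj : BundledModule 𝒳 → BundledModule 𝒴
  map : ∀ {C D : BundledModule 𝒳} (t : C.H →L[ℂ] D.H),
      Approximable 𝒳 C.mod.proj D.mod.proj t → ((obj C).H →L[ℂ] (obj D).H)
  map_approximable : ∀ {C D : BundledModule 𝒳} (t : C.H →L[ℂ] D.H)
      (ht : Approximable 𝒳 C.mod.proj D.mod.proj t),
      Approximable 𝒴 (obj C).mod.proj (obj D).mod.proj (map t ht)
  map_id : ∀ (C : BundledModule 𝒳)
      (h : Approximable 𝒳 C.mod.proj C.mod.proj (ContinuousLinearMap.id ℂ C.H)),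
      map (ContinuousLinearMap.id ℂ C.H) h = ContinuousLinearMap.id ℂ (obj C).H
  map_comp : ∀ {C D G : BundledModule 𝒳} (t : C.H →L[ℂ] D.H) (s : D.H →L[ℂ] G.H)
      (ht : Approximable 𝒳 C.mod.proj D.mod.proj t)
      (hs : Approximable 𝒳 D.mod.proj G.mod.proj s)
      (hst : Approximable 𝒳 C.mod.proj G.mod.proj (s ∘L t)),
      map (s ∘L t) hst = map s hs ∘L map t ht
  map_add : ∀ {C D : BundledModule 𝒳} (t s : C.H →L[ℂ] D.H)
      (ht : Approximable 𝒳 C.mod.proj D.mod.proj t)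
      (hs : Approximable 𝒳 C.mod.proj D.mod.proj s)
      (hts : Approximable 𝒳 C.mod.proj D.mod.proj (t + s)),
      map (t + s) hts = map t ht + map s hs
  map_smul : ∀ {C D : BundledModule 𝒳} (c : ℂ) (t : C.H →L[ℂ] D.H)
      (ht : Approximable 𝒳 C.mod.proj D.mod.proj t)
      (hct : Approximable 𝒳 C.mod.proj D.mod.proj (c • t)),
      map (c • t) hct = c • map t ht
  map_star : ∀ {C D : BundledModule 𝒳} (t : C.H →L[ℂ] D.H)
      (ht : Approximable 𝒳 C.mod.proj D.mod.proj t)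
      (hstar : Approximable 𝒳 D.mod.proj C.mod.proj (ContinuousLinearMap.adjoint t)),
      map (ContinuousLinearMap.adjoint t) hstar = ContinuousLinearMap.adjoint (map t ht)

namespace StarFunctor

variable {𝒳 : LFCMSpace X} {𝒴 : LFCMSpace Y}

/-- A full functor. -/
def Full (F : StarFunctor 𝒳 𝒴) : Prop :=
  ∀ (C D : BundledModule 𝒳) (s : (F.obj C).H →L[ℂ] (F.obj D).H),
    Approximable 𝒴 (F.obj C).mod.proj (F.obj D).mod.proj s →
    ∃ (t : C.H →L[ℂ] D.H) (ht : Approximable 𝒳 C.mod.proj D.mod.proj t), F.map t ht = s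

/-- A faithful functor. -/
def Faithful (F : StarFunctor 𝒳 𝒴) : Prop :=
  ∀ (C D : BundledModule 𝒳) (t t' : C.H →L[ℂ] D.H)
    (ht : Approximable 𝒳 C.mod.proj D.mod.proj t)
    (ht' : Approximable 𝒳 C.mod.proj D.mod.proj t'),
    F.map t ht = F.map t' ht' → t = t'

/-- An essentially surjective functor (up to isomorphism in the approximable category). -/
def EssSurj (F : StarFunctor 𝒳 𝒴) : Prop :=
  ∀ D' : BundledModule 𝒴, ∃ C : BundledModule 𝒳,
    ∃ u : (F.obj C).H →L[ℂ] D'.H, Approximable 𝒴 (F.obj C).mod.proj D'.mod.proj u ∧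
    ∃ v : D'.H →L[ℂ] (F.obj C).H, Approximable 𝒴 D'.mod.proj (F.obj C).mod.proj v ∧
      v ∘L u = ContinuousLinearMap.id ℂ (F.obj C).H ∧
      u ∘L v = ContinuousLinearMap.id ℂ D'.H

/-- A unitary `U` implements the *-isomorphism induced by `F` on the endomorphism algebra of
a module `C`. -/
def Implements (F : StarFunctor 𝒳 𝒴) (C : BundledModule 𝒳)
    (U : C.H →L[ℂ] (F.obj C).H) : Prop :=
  IsUnitaryOp U ∧ ∀ (t : C.H →L[ℂ] C.H) (ht : Approximable 𝒳 C.mod.proj C.mod.proj t),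
    F.map t ht = U ∘L t ∘L ContinuousLinearMap.adjoint U

end StarFunctor

/-- The graph of a map, as a relation `⊆ Y × X`. -/
def mapGraph {X Y : Type} (f : X → Y) : Set (Y × X) := {p | p.1 = f p.2}

/-- A relation `R ⊆ Y × X` is a coarse equivalence from `DX ⊆ X` to `DY ⊆ Y` (each with the
subspace coarse structure): controlled in both directions, densely defined and coarsely
surjective relative to `DX` and `DY`. -/
def IsRelCoarseEquivOn {X Y : Type} (CX : CoarseSpace X) (CY : CoarseSpace Y)
    (DX : Set X) (DY : Set Y) (R : Set (Y × X)) : Prop :=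
  (∀ E ∈ CX.entourages, RelComp R (RelComp E (RelTrans R)) ∈ CY.entourages) ∧
  (∀ F ∈ CY.entourages, RelComp (RelTrans R) (RelComp F R) ∈ CX.entourages) ∧
  CX.Asymptotic (Prod.snd '' R) DX ∧ CY.Asymptotic (Prod.fst '' R) DY

/-- `S ⊆ X × Y` is a coarse inverse of the relation `R ⊆ Y × X` between `DX` and `DY`:
both compositions are asymptotic to the respective (restricted) diagonals. -/
def IsRelCoarseInverseOn {X Y : Type} (CX : CoarseSpace X) (CY : CoarseSpace Y)
    (DX : Set X) (DY : Set Y) (R : Set (Y × X)) (S : Set (X × Y)) : Prop :=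
  RelAsymp CX CX (RelComp S R) {p : X × X | p.1 = p.2 ∧ p.1 ∈ DX} ∧
  RelAsymp CY CY (RelComp R S) {p : Y × Y | p.1 = p.2 ∧ p.1 ∈ DY}

/-- The statement that a coarse map `f` represents the coarse embedding induced by a full and
faithful *-functor `F` via approximate relations of implementing unitaries. -/
def RepresentsInducedEmbedding {X Y : Type} {𝒳 : LFCMSpace X} {𝒴 : LFCMSpace Y}
    (F : StarFunctor 𝒳 𝒴) (f : X → Y) : Prop :=
  ∀ (C : BundledModule 𝒳), IsFaithfulMod 𝒳 C.mod →
  ∀ (U : C.H →L[ℂ] (F.obj C).H), F.Implements C U →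
  ∀ δ : ℝ, 0 < δ → δ < 1 →
  ∃ F₀ ∈ 𝒴.coarse.entourages, ∃ E₀ ∈ 𝒳.coarse.entourages,
    ∀ F' ∈ 𝒴.coarse.entourages, F₀ ⊆ F' → ∀ E ∈ 𝒳.coarse.entourages, E₀ ⊆ E →
      RelAsymp 𝒳.coarse 𝒴.coarse
        (approxRel 𝒳 𝒴 C.mod.proj (F.obj C).mod.proj U δ F' E) (mapGraph f)

/-- Bundle a coarse module into an object of the approximable category. -/
abbrev BundledModule.ofModule {X : Type} {𝒳 : LFCMSpace X} {H : Type} [NormedAddCommGroup H]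
    [InnerProductSpace ℂ H] [CompleteSpace H] (M : CoarseModule 𝒳 H) : BundledModule 𝒳 :=
  ⟨H, M⟩

theorem LFCMSpace.disc_mem {X : Type} (𝒳 : LFCMSpace X) :
    𝒳.disc ∈ 𝒳.coarse.entourages := by
  obtain ⟨E, hE, hEP⟩ := 𝒳.isPartition.controlled
  refine 𝒳.coarse.mem_of_subset hE.1 ?_
  intro p hp
  simp only [LFCMSpace.disc, Set.mem_iUnion] at hp
  obtain ⟨A, hA, hpA⟩ := hp
  exact hEP A hA hpA

theorem prodOp_comp_inlOp {H₀ H₁ H₂ H₃ : Type}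
    [NormedAddCommGroup H₀] [InnerProductSpace ℂ H₀]
    [NormedAddCommGroup H₁] [InnerProductSpace ℂ H₁]
    [NormedAddCommGroup H₂] [InnerProductSpace ℂ H₂]
    [NormedAddCommGroup H₃] [InnerProductSpace ℂ H₃]
    (T : H₀ →L[ℂ] H₂) (S : H₁ →L[ℂ] H₃) :
    prodOp T S ∘L inlOp H₀ H₁ = inlOp H₂ H₃ ∘L T := by
  ext x
  simp [prodOp, inlOp]

theorem prodOp_comp_inrOp {H₀ H₁ H₂ H₃ : Type}
    [NormedAddCommGroup H₀] [InnerProductSpace ℂ H₀]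
    [NormedAddCommGroup H₁] [InnerProductSpace ℂ H₁]
    [NormedAddCommGroup H₂] [InnerProductSpace ℂ H₂]
    [NormedAddCommGroup H₃] [InnerProductSpace ℂ H₃]
    (T : H₀ →L[ℂ] H₂) (S : H₁ →L[ℂ] H₃) :
    prodOp T S ∘L inrOp H₀ H₁ = inrOp H₂ H₃ ∘L S := by
  ext x
  simp [prodOp, inrOp]

/-- The canonical inclusion into a direct sum of coarse modules is approximable
(indeed it has controlled propagation). -/
theorem IsDirectSum.approximable_inl {X : Type} {H₀ H₁ : Type}
    [NormedAddCommGroup H₀] [InnerProductSpace ℂ H₀] [CompleteSpace H₀]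
    [NormedAddCommGroup H₁] [InnerProductSpace ℂ H₁] [CompleteSpace H₁]
    {𝒳 : LFCMSpace X} {C₀ : CoarseModule 𝒳 H₀} {C₁ : CoarseModule 𝒳 H₁}
    {M : CoarseModule 𝒳 (WithLp 2 (H₀ × H₁))} (hM : IsDirectSum 𝒳 C₀ C₁ M) :
    Approximable 𝒳 C₀.proj M.proj (inlOp H₀ H₁) := by
  intro ε hε
  refine ⟨inlOp H₀ H₁, ?_, by simp [hε.le]⟩
  refine 𝒳.coarse.mem_of_subset (𝒳.coarse.comp_mem 𝒳.disc_mem 𝒳.disc_mem) ?_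
  rintro ⟨y, x⟩ hyx
  obtain ⟨s, ⟨B, A, rfl, hBmeas, hBb, hAmeas, hAb, hne⟩, hmem⟩ := hyx
  have key : M.proj B ∘L inlOp H₀ H₁ ∘L C₀.proj A
      = inlOp H₀ H₁ ∘L C₀.proj (B ∩ A) := by
    rw [C₀.proj_inter hBmeas hAmeas, hM B, ← ContinuousLinearMap.comp_assoc,
      prodOp_comp_inlOp, ContinuousLinearMap.comp_assoc]
  have hBA : (B ∩ A).Nonempty := by
    by_contra h
    rw [Set.not_nonempty_iff_eq_empty] at h
    apply hne
    rw [key, h, C₀.proj_empty]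
    ext z
    simp
  obtain ⟨z, hzB, hzA⟩ := hBA
  obtain ⟨hyB, hxA⟩ := hmem
  exact ⟨z, hBb ⟨hyB, hzB⟩, hAb ⟨hzA, hxA⟩⟩

theorem IsDirectSum.approximable_inr {X : Type} {H₀ H₁ : Type}
    [NormedAddCommGroup H₀] [InnerProductSpace ℂ H₀] [CompleteSpace H₀]
    [NormedAddCommGroup H₁] [InnerProductSpace ℂ H₁] [CompleteSpace H₁]
    {𝒳 : LFCMSpace X} {C₀ : CoarseModule 𝒳 H₀} {C₁ : CoarseModule 𝒳 H₁}
    {M : CoarseModule 𝒳 (WithLp 2 (H₀ × H₁))} (hM : IsDirectSum 𝒳 C₀ C₁ M) :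
    Approximable 𝒳 C₁.proj M.proj (inrOp H₀ H₁) := by
  intro ε hε
  refine ⟨inrOp H₀ H₁, ?_, by simp [hε.le]⟩
  refine 𝒳.coarse.mem_of_subset (𝒳.coarse.comp_mem 𝒳.disc_mem 𝒳.disc_mem) ?_
  rintro ⟨y, x⟩ hyx
  obtain ⟨s, ⟨B, A, rfl, hBmeas, hBb, hAmeas, hAb, hne⟩, hmem⟩ := hyx
  have key : M.proj B ∘L inrOp H₀ H₁ ∘L C₁.proj A
      = inrOp H₀ H₁ ∘L C₁.proj (B ∩ A) := by
    rw [C₁.proj_inter hBmeas hAmeas, hM B, ← ContinuousLinearMap.comp_assoc,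
      prodOp_comp_inrOp, ContinuousLinearMap.comp_assoc]
  have hBA : (B ∩ A).Nonempty := by
    by_contra h
    rw [Set.not_nonempty_iff_eq_empty] at h
    apply hne
    rw [key, h, C₁.proj_empty]
    ext z
    simp
  obtain ⟨z, hzB, hzA⟩ := hBA
  obtain ⟨hyB, hxA⟩ := hmem
  exact ⟨z, hBb ⟨hyB, hzB⟩, hAb ⟨hzA, hxA⟩⟩

/-! ### Auxiliary lemmas for Statement 7 -/

section Aux7

open CoarseSpace ContinuousLinearMap

local notation "⟪" x ", " y "⟫" => @inner ℂ _ _ x y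

variable {X : Type}

lemma aux_block_sq_subset_disc (𝒳 : LFCMSpace X) {B : Set X} (hB : B ∈ 𝒳.partition) :
    B ×ˢ B ⊆ 𝒳.disc := fun p hp => Set.mem_biUnion hB hp

lemma aux_meas_inter (𝒳 : LFCMSpace X) {A B : Set X} (hA : A ∈ 𝒳.meas) (hB : B ∈ 𝒳.meas) :
    A ∩ B ∈ 𝒳.meas := by
  have h : A ∩ B = (Aᶜ ∪ Bᶜ)ᶜ := by simp
  rw [h]
  exact 𝒳.compl_mem (𝒳.union_mem (𝒳.compl_mem hA) (𝒳.compl_mem hB))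

lemma aux_bounded_subset {C : CoarseSpace X} {A B : Set X} (hB : C.IsBounded B) (h : A ⊆ B) :
    C.IsBounded A := by
  obtain ⟨E, hE, hBE⟩ := hB
  exact ⟨E, hE, (Set.prod_mono h h).trans hBE⟩

lemma aux_bounded_of_disc (𝒳 : LFCMSpace X) {A : Set X} (hA : A ×ˢ A ⊆ 𝒳.disc) :
    𝒳.coarse.IsBounded A := ⟨𝒳.disc, 𝒳.disc_mem, hA⟩

lemma aux_bounded_nbhd {C : CoarseSpace X} {E : Set (X × X)} (hE : E ∈ C.entourages)
    {A : Set X} (hA : C.IsBounded A) : C.IsBounded (CoarseSpace.nbhd E A) := by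
  obtain ⟨F, hF, hAF⟩ := hA
  refine ⟨RelComp E (RelComp F (RelTrans E)),
    C.comp_mem hE (C.comp_mem hF (C.transpose_mem hE)), ?_⟩
  rintro ⟨x, y⟩ ⟨⟨a, ha, hxa⟩, ⟨a', ha', hya'⟩⟩
  exact ⟨a, hxa, a', hAF ⟨ha, ha'⟩, hya'⟩

/-- Finite additivity of the projections of a coarse module. -/
lemma aux_proj_finset_biUnion {H : Type} [NormedAddCommGroup H] [InnerProductSpace ℂ H]
    [CompleteSpace H] (𝒳 : LFCMSpace X) (M : CoarseModule 𝒳 H) {ι : Type}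
    (S : Finset ι) (f : ι → Set X)
    (hm : ∀ i ∈ S, f i ∈ 𝒳.meas)
    (hd : ∀ i ∈ S, ∀ j ∈ S, i ≠ j → Disjoint (f i) (f j)) :
    (⋃ i ∈ S, f i) ∈ 𝒳.meas ∧ M.proj (⋃ i ∈ S, f i) = ∑ i ∈ S, M.proj (f i) := by
  classical
  induction S using Finset.induction_on with
  | empty => simp [M.proj_empty, 𝒳.empty_mem]
  | @insert a s ha ih =>
    have hm' : ∀ i ∈ s, f i ∈ 𝒳.meas := fun i hi => hm i (Finset.mem_insert_of_mem hi)
    have hd' : ∀ i ∈ s, ∀ j ∈ s, i ≠ j → Disjoint (f i) (f j) :=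
      fun i hi j hj hij => hd i (Finset.mem_insert_of_mem hi) j (Finset.mem_insert_of_mem hj) hij
    obtain ⟨hmeas, hproj⟩ := ih hm' hd'
    have hU : (⋃ i ∈ insert a s, f i) = f a ∪ ⋃ i ∈ s, f i := by
      simp [Set.biUnion_insert]
    have hdisj : Disjoint (f a) (⋃ i ∈ s, f i) := by
      rw [Set.disjoint_iUnion₂_right]
      intro i hi
      exact hd a (Finset.mem_insert_self a s) i (Finset.mem_insert_of_mem hi)
        (fun h => ha (h ▸ hi))
    have hma : f a ∈ 𝒳.meas := hm a (Finset.mem_insert_self a s)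
    constructor
    · rw [hU]; exact 𝒳.union_mem hma hmeas
    · rw [hU, M.proj_union hma hmeas hdisj, hproj, Finset.sum_insert ha]

/-- Decomposition of a bounded set into its intersections with finitely many partition blocks. -/
lemma aux_exists_block_decomp (𝒳 : LFCMSpace X) {D : Set X} (hDb : 𝒳.coarse.IsBounded D) :
    ∃ S : Finset (Set X), (∀ B ∈ S, B ∈ 𝒳.partition) ∧ (∀ B ∈ S, (B ∩ D).Nonempty) ∧
      D = ⋃ B ∈ S, B ∩ D := by
  have hfin := 𝒳.isPartition.locallyFinite D hDb
  refine ⟨hfin.toFinset, ?_, ?_, ?_⟩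
  · intro B hB; exact (hfin.mem_toFinset.mp hB).1
  · intro B hB; exact (hfin.mem_toFinset.mp hB).2
  · ext x
    constructor
    · intro hx
      have hcov : x ∈ ⋃₀ 𝒳.partition := by rw [𝒳.isPartition.covers]; trivial
      obtain ⟨B, hB, hxB⟩ := hcov
      have hBmem : B ∈ hfin.toFinset := hfin.mem_toFinset.mpr ⟨hB, ⟨x, hxB, hx⟩⟩
      exact Set.mem_biUnion hBmem ⟨hxB, hx⟩
    · rintro hx
      simp only [Set.mem_iUnion] at hx
      obtain ⟨B, _, _, hxD⟩ := hx
      exact hxD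

/-- Key support lemma: if `N` contains the `Supp(s)`-neighbourhood of a discretely bounded
measurable set `A`, then `proj N` absorbs `s ∘ proj A`. -/
lemma aux_supp_confine {H₀ H₁ : Type}
    [NormedAddCommGroup H₀] [InnerProductSpace ℂ H₀] [CompleteSpace H₀]
    [NormedAddCommGroup H₁] [InnerProductSpace ℂ H₁] [CompleteSpace H₁]
    (𝒳 : LFCMSpace X) (C0 : CoarseModule 𝒳 H₀) (C1 : CoarseModule 𝒳 H₁)
    (s : H₀ →L[ℂ] H₁) {A N : Set X} (hA : A ∈ 𝒳.meas) (hAne : A.Nonempty)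
    (hAd : A ×ˢ A ⊆ 𝒳.disc) (hNm : N ∈ 𝒳.meas)
    (hN : CoarseSpace.nbhd (opSupp 𝒳 𝒳 C0.proj C1.proj s) A ⊆ N) (ξ : H₀) :
    C1.proj N (s (C0.proj A ξ)) = s (C0.proj A ξ) := by
  set v := s (C0.proj A ξ) with hv
  -- for every bounded measurable D the vector `v - proj N v` is killed by `proj D`
  have key : ∀ D, D ∈ 𝒳.meas → 𝒳.coarse.IsBounded D → C1.proj D (v - C1.proj N v) = 0 := by
    intro D hD hDb
    have hDN : D ∩ N ∈ 𝒳.meas := aux_meas_inter 𝒳 hD hNm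
    have hDNc : D ∩ Nᶜ ∈ 𝒳.meas := aux_meas_inter 𝒳 hD (𝒳.compl_mem hNm)
    have h1 : C1.proj D (C1.proj N v) = C1.proj (D ∩ N) v := by
      rw [C1.proj_inter hD hNm]; rfl
    have hsplit : C1.proj D = C1.proj (D ∩ N) + C1.proj (D ∩ Nᶜ) := by
      rw [← C1.proj_union hDN hDNc
        (Disjoint.mono Set.inter_subset_right Set.inter_subset_right disjoint_compl_right),
        Set.inter_union_compl]
    have hz : C1.proj (D ∩ Nᶜ) v = 0 := by
      obtain ⟨S, hSP, hSne, hSdec⟩ :=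
        aux_exists_block_decomp 𝒳 (aux_bounded_subset hDb (Set.inter_subset_left (t := Nᶜ)))
      have hmpieces : ∀ B ∈ S, B ∩ (D ∩ Nᶜ) ∈ 𝒳.meas :=
        fun B hB => aux_meas_inter 𝒳 (𝒳.isPartition.measurable (hSP B hB)) hDNc
      have hdpieces : ∀ B ∈ S, ∀ B' ∈ S, B ≠ B' →
          Disjoint (B ∩ (D ∩ Nᶜ)) (B' ∩ (D ∩ Nᶜ)) := fun B hB B' hB' hne =>
        Disjoint.mono Set.inter_subset_left Set.inter_subset_left
          (𝒳.isPartition.pairwiseDisjoint B (hSP B hB) B' (hSP B' hB') hne)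
      have hzero : ∀ B ∈ S, C1.proj (B ∩ (D ∩ Nᶜ)) ∘L s ∘L C0.proj A = 0 := by
        intro B hB
        by_contra hne
        -- the rectangle lies in the support of s
        have hrect : (B ∩ (D ∩ Nᶜ)) ×ˢ A ⊆ opSupp 𝒳 𝒳 C0.proj C1.proj s := by
          apply Set.subset_sUnion_of_mem
          exact ⟨B ∩ (D ∩ Nᶜ), A, rfl, hmpieces B hB,
            (Set.prod_mono (Set.inter_subset_left) (Set.inter_subset_left)).trans
              (aux_block_sq_subset_disc 𝒳 (hSP B hB)), hA, hAd, hne⟩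
        obtain ⟨b, hbB, hbD, hbNc⟩ := hSne B hB
        obtain ⟨a, haA⟩ := hAne
        have hbN : b ∈ N := hN ⟨a, haA, hrect ⟨⟨hbB, hbD, hbNc⟩, haA⟩⟩
        exact hbNc hbN
      have hdec : C1.proj (D ∩ Nᶜ) = ∑ B ∈ S, C1.proj (B ∩ (D ∩ Nᶜ)) := by
        conv_lhs => rw [hSdec]
        exact (aux_proj_finset_biUnion 𝒳 C1 S _ hmpieces hdpieces).2
      rw [hdec]
      rw [ContinuousLinearMap.sum_apply]
      refine Finset.sum_eq_zero fun B hB => ?_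
      have := hzero B hB
      calc C1.proj (B ∩ (D ∩ Nᶜ)) v
          = (C1.proj (B ∩ (D ∩ Nᶜ)) ∘L s ∘L C0.proj A) ξ := rfl
        _ = 0 := by rw [this]; rfl
    rw [map_sub, h1, hsplit]
    simp [hz]
  -- now use density of the span of bounded ranges
  set w := v - C1.proj N v with hw
  have hworth : w ∈ (Submodule.span ℂ
      (⋃ A ∈ {A | A ∈ 𝒳.meas ∧ 𝒳.coarse.IsBounded A}, Set.range (C1.proj A)))ᗮ := by
    rw [Submodule.mem_orthogonal]
    intro u hu
    induction hu using Submodule.span_induction with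
    | mem u hu =>
      simp only [Set.mem_iUnion] at hu
      obtain ⟨D, hD, η, rfl⟩ := hu
      have hsa : ContinuousLinearMap.adjoint (C1.proj D) = C1.proj D :=
        (C1.proj_selfAdjoint D hD.1).adjoint_eq
      calc ⟪C1.proj D η, w⟫ = ⟪ContinuousLinearMap.adjoint (C1.proj D) η, w⟫ := by rw [hsa]
        _ = ⟪η, C1.proj D w⟫ := ContinuousLinearMap.adjoint_inner_left _ _ _
        _ = 0 := by rw [key D hD.1 hD.2, inner_zero_right]
    | zero => exact inner_zero_left _
    | add x y hx hy hpx hpy => rw [inner_add_left, hpx, hpy, add_zero]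
    | smul c x hx hpx => rw [inner_smul_left, hpx, mul_zero]
  have hbot : (Submodule.span ℂ
      (⋃ A ∈ {A | A ∈ 𝒳.meas ∧ 𝒳.coarse.IsBounded A}, Set.range (C1.proj A)))ᗮ = ⊥ := by
    rw [← Submodule.topologicalClosure_eq_top_iff,
      ← Submodule.dense_iff_topologicalClosure_eq_top]
    exact C1.nondeg
  have : w = 0 := by rw [hbot] at hworth; exact hworth
  have := sub_eq_zero.mp this
  exact this.symm

lemma aux_kappa_split {κ a b : Cardinal} (hκ : κ = 1 ∨ Cardinal.aleph0 ≤ κ)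
    (h : κ ≤ a + b) : κ ≤ a ∨ κ ≤ b := by
  by_contra hc
  push_neg at hc
  obtain ⟨h1, h2⟩ := hc
  rcases hκ with rfl | hκ
  · rw [Cardinal.lt_one_iff_zero] at h1 h2
    rw [h1, h2, add_zero] at h
    exact absurd h (by simp)
  · exact absurd h (not_le.mpr (Cardinal.add_lt_of_lt hκ h1 h2))

/-- If `κ ≤ rank` of a projection onto a finite disjoint union, then some block already has
rank at least `κ` (for `κ = 1` or `κ` infinite). -/
lemma aux_exists_rank_ge {H : Type} [NormedAddCommGroup H] [InnerProductSpace ℂ H]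
    [CompleteSpace H] (𝒳 : LFCMSpace X) (M : CoarseModule 𝒳 H)
    (κ : Cardinal) (hκ : κ = 1 ∨ Cardinal.aleph0 ≤ κ) (S : Finset (Set X))
    (hm : ∀ B ∈ S, B ∈ 𝒳.meas)
    (hd : ∀ B ∈ S, ∀ B' ∈ S, B ≠ B' → Disjoint B B')
    (h : κ ≤ projRank (M.proj (⋃ B ∈ S, B))) :
    ∃ B ∈ S, κ ≤ projRank (M.proj B) := by
  classical
  induction S using Finset.induction_on with
  | empty =>
    exfalso
    have h0 : (⋃ B ∈ (∅ : Finset (Set X)), B) = (∅ : Set X) := by simp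
    rw [h0, M.proj_empty] at h
    have hz : projRank (0 : H →L[ℂ] H) = 0 := by
      simp [projRank, LinearMap.rank_zero]
    rw [hz] at h
    have : κ = 0 := le_zero_iff.mp h
    rcases hκ with rfl | hκ
    · simp at this
    · rw [this] at hκ; exact absurd (le_zero_iff.mp hκ) Cardinal.aleph0_ne_zero
  | @insert a s ha ih =>
    have hm' : ∀ B ∈ s, B ∈ 𝒳.meas := fun B hB => hm B (Finset.mem_insert_of_mem hB)
    have hd' : ∀ B ∈ s, ∀ B' ∈ s, B ≠ B' → Disjoint B B' :=
      fun B hB B' hB' hne => hd B (Finset.mem_insert_of_mem hB) B'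
        (Finset.mem_insert_of_mem hB') hne
    have hmeas : (⋃ B ∈ s, B) ∈ 𝒳.meas := (aux_proj_finset_biUnion 𝒳 M s id hm' hd').1
    have hdisj : Disjoint a (⋃ B ∈ s, B) := by
      rw [Set.disjoint_iUnion₂_right]
      intro B hB
      exact hd a (Finset.mem_insert_self a s) B (Finset.mem_insert_of_mem hB)
        (fun hEq => ha (hEq ▸ hB))
    have hU : (⋃ B ∈ insert a s, B) = a ∪ ⋃ B ∈ s, B := by simp [Set.biUnion_insert]
    rw [hU, M.proj_union (hm a (Finset.mem_insert_self a s)) hmeas hdisj] at h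
    have hle : projRank (M.proj a + M.proj (⋃ B ∈ s, B)) ≤
        projRank (M.proj a) + projRank (M.proj (⋃ B ∈ s, B)) := by
      simpa [projRank] using
        LinearMap.rank_add_le (M.proj a : H →ₗ[ℂ] H) (M.proj (⋃ B ∈ s, B) : H →ₗ[ℂ] H)
    rcases aux_kappa_split hκ (h.trans hle) with h' | h'
    · exact ⟨a, Finset.mem_insert_self a s, h'⟩
    · obtain ⟨B, hBs, hB⟩ := ih hm' hd' h'
      exact ⟨B, Finset.mem_insert_of_mem hBs, hB⟩

/-- Main subordination lemma: an approximable operator that is bounded below carries the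
`κ`-domain of the source module into a controlled neighbourhood of the `κ`-domain of the
target module. -/
lemma aux_domKappa_subordinate {H₀ H₁ : Type}
    [NormedAddCommGroup H₀] [InnerProductSpace ℂ H₀] [CompleteSpace H₀]
    [NormedAddCommGroup H₁] [InnerProductSpace ℂ H₁] [CompleteSpace H₁]
    (𝒳 : LFCMSpace X) (C0 : CoarseModule 𝒳 H₀) (C1 : CoarseModule 𝒳 H₁)
    (T : H₀ →L[ℂ] H₁) (hT : Approximable 𝒳 C0.proj C1.proj T)
    (c : ℝ) (hc : 0 < c) (hlow : ∀ ξ : H₀, ‖ξ‖ ≤ c * ‖T ξ‖)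
    (κ : Cardinal) (hκ : κ = 1 ∨ Cardinal.aleph0 ≤ κ) :
    𝒳.coarse.Subordinate (domKappa 𝒳 C0 κ) (domKappa 𝒳 C1 κ) := by
  -- approximate T well enough to keep it bounded below
  obtain ⟨s, hs_prop, hs_close⟩ := hT ((2 * c)⁻¹) (by positivity)
  have hs_low : ∀ ξ : H₀, ‖ξ‖ ≤ 2 * c * ‖s ξ‖ := by
    intro ξ
    have h1 : ‖T ξ - s ξ‖ ≤ (2 * c)⁻¹ * ‖ξ‖ := by
      calc ‖T ξ - s ξ‖ = ‖(T - s) ξ‖ := by rw [ContinuousLinearMap.sub_apply]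
        _ ≤ ‖T - s‖ * ‖ξ‖ := (T - s).le_opNorm ξ
        _ ≤ (2 * c)⁻¹ * ‖ξ‖ := by
            apply mul_le_mul_of_nonneg_right hs_close (norm_nonneg ξ)
    have h2 : ‖T ξ‖ ≤ ‖s ξ‖ + ‖T ξ - s ξ‖ := by
      calc ‖T ξ‖ = ‖s ξ + (T ξ - s ξ)‖ := by congr 1; abel
        _ ≤ ‖s ξ‖ + ‖T ξ - s ξ‖ := norm_add_le _ _
    have h3 := hlow ξ
    have hcpos : (0:ℝ) < 2 * c := by positivity
    have hkey : c * ((2 * c)⁻¹ * ‖ξ‖) = ‖ξ‖ / 2 := by field_simp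
    nlinarith [norm_nonneg (s ξ), norm_nonneg ξ]
  have hs_inj : Function.Injective s := by
    intro ξ η h
    have h0 : s (ξ - η) = 0 := by rw [map_sub, h, sub_self]
    have := hs_low (ξ - η)
    rw [h0, norm_zero, mul_zero] at this
    have : ξ - η = 0 := norm_le_zero_iff.mp this
    exact sub_eq_zero.mp this
  set Es := opSupp 𝒳 𝒳 C0.proj C1.proj s with hEs
  have hEs_mem : Es ∈ 𝒳.coarse.entourages := hs_prop
  refine ⟨RelComp 𝒳.disc (RelTrans Es),
    𝒳.coarse.comp_mem 𝒳.disc_mem (𝒳.coarse.transpose_mem hEs_mem), ?_⟩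
  intro x hx
  obtain ⟨A, ⟨hAmeas, hAdisc, hArank⟩, hxA⟩ := hx
  have hAne : A.Nonempty := ⟨x, hxA⟩
  have hAb : 𝒳.coarse.IsBounded A := aux_bounded_of_disc 𝒳 hAdisc
  have hMb : 𝒳.coarse.IsBounded (CoarseSpace.nbhd Es A) := aux_bounded_nbhd hEs_mem hAb
  obtain ⟨S, hSP, hSne, hSdec⟩ := aux_exists_block_decomp 𝒳 hMb
  set N : Set X := ⋃ B ∈ S, B with hNdef
  have hSm : ∀ B ∈ S, B ∈ 𝒳.meas := fun B hB => 𝒳.isPartition.measurable (hSP B hB)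
  have hSd : ∀ B ∈ S, ∀ B' ∈ S, B ≠ B' → Disjoint B B' :=
    fun B hB B' hB' hne => 𝒳.isPartition.pairwiseDisjoint B (hSP B hB) B' (hSP B' hB') hne
  have hNmeas : N ∈ 𝒳.meas := (aux_proj_finset_biUnion 𝒳 C1 S id hSm hSd).1
  have hMN : CoarseSpace.nbhd Es A ⊆ N := by
    intro y hy
    rw [hSdec] at hy
    simp only [Set.mem_iUnion] at hy
    obtain ⟨B, hB, hyB, _⟩ := hy
    exact Set.mem_biUnion hB hyB
  have hconf : ∀ ξ : H₀, C1.proj N (s (C0.proj A ξ)) = s (C0.proj A ξ) :=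
    aux_supp_confine 𝒳 C0 C1 s hAmeas hAne hAdisc hNmeas hMN
  -- rank estimate: κ ≤ rank (proj N)
  have hrankN : κ ≤ projRank (C1.proj N) := by
    set p0 : H₀ →ₗ[ℂ] H₀ := (C0.proj A : H₀ →ₗ[ℂ] H₀) with hp0
    set p1 : H₁ →ₗ[ℂ] H₁ := (C1.proj N : H₁ →ₗ[ℂ] H₁) with hp1
    set f : LinearMap.range p0 →ₗ[ℂ] H₁ :=
      (s : H₀ →ₗ[ℂ] H₁).comp (Submodule.subtype (LinearMap.range p0)) with hf
    have hrange : ∀ ξ : LinearMap.range p0, f ξ ∈ LinearMap.range p1 := by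
      rintro ⟨ξ, hξ⟩
      obtain ⟨η, rfl⟩ := hξ
      refine ⟨s (C0.proj A η), ?_⟩
      exact hconf η
    set g : LinearMap.range p0 →ₗ[ℂ] LinearMap.range p1 :=
      LinearMap.codRestrict (LinearMap.range p1) f hrange with hg
    have hginj : Function.Injective g := by
      intro ξ η hξη
      have hfe : f ξ = f η := congrArg Subtype.val hξη
      have hse : s ξ.1 = s η.1 := hfe
      exact Subtype.ext (hs_inj hse)
    calc κ ≤ projRank (C0.proj A) := hArank
      _ = Module.rank ℂ (LinearMap.range p0) := rfl
      _ ≤ Module.rank ℂ (LinearMap.range p1) := g.rank_le_of_injective hginj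
      _ = projRank (C1.proj N) := rfl
  obtain ⟨B, hBS, hBrank⟩ := aux_exists_rank_ge 𝒳 C1 κ hκ S hSm hSd hrankN
  obtain ⟨b, hbB, hbM⟩ := hSne B hBS
  obtain ⟨a, haA, hba⟩ := hbM
  refine ⟨b, ?_, ?_⟩
  · exact ⟨B, ⟨hSm B hBS, aux_block_sq_subset_disc 𝒳 (hSP B hBS), hBrank⟩, hbB⟩
  · exact ⟨a, hAdisc ⟨hxA, haA⟩, hba⟩

/-- The adjoint of an approximable operator is approximable. -/
lemma aux_approximable_adjoint {H₀ H₁ : Type}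
    [NormedAddCommGroup H₀] [InnerProductSpace ℂ H₀] [CompleteSpace H₀]
    [NormedAddCommGroup H₁] [InnerProductSpace ℂ H₁] [CompleteSpace H₁]
    (𝒳 : LFCMSpace X) (C0 : CoarseModule 𝒳 H₀) (C1 : CoarseModule 𝒳 H₁)
    (T : H₀ →L[ℂ] H₁) (hT : Approximable 𝒳 C0.proj C1.proj T) :
    Approximable 𝒳 C1.proj C0.proj (ContinuousLinearMap.adjoint T) := by
  intro ε hε
  obtain ⟨s, hs, hcl⟩ := hT ε hε
  refine ⟨ContinuousLinearMap.adjoint s, ?_, ?_⟩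
  · refine 𝒳.coarse.mem_of_subset (𝒳.coarse.transpose_mem hs) ?_
    refine Set.sUnion_subset ?_
    rintro S ⟨B, A, rfl, hB, hBd, hA, hAd, hne⟩
    have hne' : C1.proj A ∘L s ∘L C0.proj B ≠ 0 := by
      intro h0
      apply hne
      have := congrArg ContinuousLinearMap.adjoint h0
      rw [map_zero] at this
      rw [ContinuousLinearMap.adjoint_comp, ContinuousLinearMap.adjoint_comp,
        (C0.proj_selfAdjoint B hB).adjoint_eq, (C1.proj_selfAdjoint A hA).adjoint_eq] at this
      rwa [ContinuousLinearMap.comp_assoc] at this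
    have hrect : A ×ˢ B ⊆ opSupp 𝒳 𝒳 C0.proj C1.proj s :=
      Set.subset_sUnion_of_mem ⟨A, B, rfl, hA, hAd, hB, hBd, hne'⟩
    rintro ⟨b, a⟩ ⟨hb, ha⟩
    exact hrect ⟨ha, hb⟩
  · have heq : ContinuousLinearMap.adjoint T - ContinuousLinearMap.adjoint s
        = ContinuousLinearMap.adjoint (T - s) := (map_sub (ContinuousLinearMap.adjoint
          (E := H₀) (F := H₁)) T s).symm
    rw [heq]
    calc ‖ContinuousLinearMap.adjoint (T - s)‖ = ‖T - s‖ :=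
          LinearIsometryEquiv.norm_map _ _
      _ ≤ ε := hcl

end Aux7

/-- Isomorphic coarse modules (via an invertible approximable operator)
have asymptotically equivalent κ-domains, for κ infinite or κ = 1. -/
theorem domKappa_invariance {X : Type} {H₀ H₁ : Type}
    [NormedAddCommGroup H₀] [InnerProductSpace ℂ H₀] [CompleteSpace H₀]
    [NormedAddCommGroup H₁] [InnerProductSpace ℂ H₁] [CompleteSpace H₁]
    (𝒳 : LFCMSpace X) (C0 : CoarseModule 𝒳 H₀) (C1 : CoarseModule 𝒳 H₁)
    (t : H₀ ≃L[ℂ] H₁)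
    (ht : Approximable 𝒳 C0.proj C1.proj (t : H₀ →L[ℂ] H₁))
    (κ : Cardinal) (hκ : κ = 1 ∨ Cardinal.aleph0 ≤ κ) :
    𝒳.coarse.Asymptotic (domKappa 𝒳 C0 κ) (domKappa 𝒳 C1 κ) := by
  constructor
  · -- forward direction, using `t`
    refine aux_domKappa_subordinate 𝒳 C0 C1 (t : H₀ →L[ℂ] H₁) ht
      (‖(t.symm : H₁ →L[ℂ] H₀)‖ + 1) (by positivity) ?_ κ hκ
    intro ξ
    have h1 : ‖ξ‖ = ‖(t.symm : H₁ →L[ℂ] H₀) ((t : H₀ →L[ℂ] H₁) ξ)‖ := by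
      simp
    have h2 : ‖(t.symm : H₁ →L[ℂ] H₀) ((t : H₀ →L[ℂ] H₁) ξ)‖
        ≤ ‖(t.symm : H₁ →L[ℂ] H₀)‖ * ‖(t : H₀ →L[ℂ] H₁) ξ‖ :=
      (t.symm : H₁ →L[ℂ] H₀).le_opNorm _
    have h3 := norm_nonneg ((t : H₀ →L[ℂ] H₁) ξ)
    nlinarith
  · -- reverse direction, using the adjoint of `t`
    refine aux_domKappa_subordinate 𝒳 C1 C0 (ContinuousLinearMap.adjoint (t : H₀ →L[ℂ] H₁))
      (aux_approximable_adjoint 𝒳 C0 C1 _ ht)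
      (‖ContinuousLinearMap.adjoint (t.symm : H₁ →L[ℂ] H₀)‖ + 1) (by positivity) ?_ κ hκ
    intro η
    have hinvcomp : ContinuousLinearMap.adjoint (t.symm : H₁ →L[ℂ] H₀) ∘L
        ContinuousLinearMap.adjoint (t : H₀ →L[ℂ] H₁) = ContinuousLinearMap.id ℂ H₁ := by
      rw [← ContinuousLinearMap.adjoint_comp, ContinuousLinearEquiv.coe_comp_coe_symm,
        ContinuousLinearMap.adjoint_id]
    have h1 : ‖η‖ = ‖ContinuousLinearMap.adjoint (t.symm : H₁ →L[ℂ] H₀)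
        (ContinuousLinearMap.adjoint (t : H₀ →L[ℂ] H₁) η)‖ := by
      have := DFunLike.congr_fun hinvcomp η
      simp only [ContinuousLinearMap.coe_comp', Function.comp_apply,
        ContinuousLinearMap.coe_id', id_eq] at this
      rw [this]
    have h2 : ‖ContinuousLinearMap.adjoint (t.symm : H₁ →L[ℂ] H₀)
        (ContinuousLinearMap.adjoint (t : H₀ →L[ℂ] H₁) η)‖
        ≤ ‖ContinuousLinearMap.adjoint (t.symm : H₁ →L[ℂ] H₀)‖ *
          ‖ContinuousLinearMap.adjoint (t : H₀ →L[ℂ] H₁) η‖ :=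
      (ContinuousLinearMap.adjoint (t.symm : H₁ →L[ℂ] H₀)).le_opNorm _
    have h3 := norm_nonneg (ContinuousLinearMap.adjoint (t : H₀ →L[ℂ] H₁) η)
    nlinarith
end
end

section
/- Let 𝒳 be an LFCM space admitting an infinite discrete partition. Then any two discrete partitions {A_i}_{i∈I} and {B_j}_{j∈J} of 𝒳 have index sets of equal cardinality: |I| = |J|. -/
noncomputable section

open scoped ENNReal

variable {X Y Z : Type}
variable {H₀ H₁ H₂ H₃ : Type}

/-- Every block of a discrete partition is bounded. -/
theorem IsDiscretePartition.bounded_of_mem {X : Type} {C : CoarseSpace X} {meas : Set (Set X)}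
    {P : Set (Set X)} (hP : IsDiscretePartition C meas P) {A : Set X} (hA : A ∈ P) :
    C.IsBounded A := by
  obtain ⟨E, hE, hEP⟩ := hP.controlled
  exact ⟨E, hE.1, hEP A hA⟩

/-- Every partition is covered by the finite fibers over blocks of another partition. -/
theorem partition_subset_biUnion {X : Type} {C : CoarseSpace X} {meas : Set (Set X)}
    {P S : Set (Set X)} (hP : IsDiscretePartition C meas P)
    (hS : IsDiscretePartition C meas S) :
    S ⊆ ⋃ A ∈ P, {B | B ∈ S ∧ (B ∩ A).Nonempty} := by
  intro B hB
  obtain ⟨x, hx⟩ := hS.nonempty B hB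
  have hxU : x ∈ ⋃₀ P := hP.covers ▸ Set.mem_univ x
  obtain ⟨A, hA, hxA⟩ := hxU
  exact Set.mem_biUnion hA ⟨hB, ⟨x, hx, hxA⟩⟩

theorem partition_fiber_finite {X : Type} {C : CoarseSpace X} {meas : Set (Set X)}
    {P S : Set (Set X)} (hP : IsDiscretePartition C meas P)
    (hS : IsDiscretePartition C meas S) {A : Set X} (hA : A ∈ P) :
    {B | B ∈ S ∧ (B ∩ A).Nonempty}.Finite :=
  hS.locallyFinite A (hP.bounded_of_mem hA)

/-- If one discrete partition is infinite, every discrete partition is infinite. -/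
theorem partition_infinite {X : Type} {C : CoarseSpace X} {meas : Set (Set X)}
    {P S : Set (Set X)} (hP : IsDiscretePartition C meas P)
    (hS : IsDiscretePartition C meas S) (hSinf : S.Infinite) : P.Infinite := by
  intro hPfin
  exact hSinf (((hPfin.biUnion fun A hA => partition_fiber_finite hP hS hA).subset
    (partition_subset_biUnion hP hS)))

theorem partition_card_le {X : Type} {C : CoarseSpace X} {meas : Set (Set X)}
    {P S : Set (Set X)} (hP : IsDiscretePartition C meas P)
    (hS : IsDiscretePartition C meas S) (hPinf : P.Infinite) :
    Cardinal.mk S ≤ Cardinal.mk P := by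
  calc Cardinal.mk S
      ≤ Cardinal.mk (⋃ A ∈ P, {B | B ∈ S ∧ (B ∩ A).Nonempty}) :=
        Cardinal.mk_le_mk_of_subset (partition_subset_biUnion hP hS)
    _ ≤ Cardinal.mk P * ⨆ A : P, Cardinal.mk {B | B ∈ S ∧ (B ∩ (A : Set X)).Nonempty} :=
        Cardinal.mk_biUnion_le _ _
    _ ≤ Cardinal.mk P * Cardinal.aleph0 := by
        refine mul_le_mul_right (ciSup_le' fun A => ?_) _
        exact ((partition_fiber_finite hP hS A.2).lt_aleph0).le
    _ = Cardinal.mk P := Cardinal.mul_aleph0_eq (Cardinal.aleph0_le_mk_iff.mpr hPinf.to_subtype)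

/-- If an LFCM space admits an infinite discrete partition, then any two
discrete partitions have the same cardinality. -/
theorem discretePartitions_same_cardinality {X : Type} (𝒳 : LFCMSpace X)
    (hinf : ∃ R : Set (Set X), IsDiscretePartition 𝒳.coarse 𝒳.meas R ∧ R.Infinite)
    (P Q : Set (Set X))
    (hP : IsDiscretePartition 𝒳.coarse 𝒳.meas P)
    (hQ : IsDiscretePartition 𝒳.coarse 𝒳.meas Q) :
    Cardinal.mk P = Cardinal.mk Q := by
  obtain ⟨R, hR, hRinf⟩ := hinf
  have hPinf : P.Infinite := partition_infinite hP hR hRinf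
  have hQinf : Q.Infinite := partition_infinite hQ hR hRinf
  exact le_antisymm (partition_card_le hQ hP hQinf) (partition_card_le hP hQ hPinf)
end
end

section
/- Let 𝒳 and 𝒴 be LFCM spaces, C_X a faithful coarse 𝒳-module and C_Y a coarse 𝒴-module. Let T : H_{C_X} → H_{C_Y} be a bounded operator, u a central unitary of End_{𝒜(𝒳)}(C_X), and v a central unitary of End_{𝒜(𝒴)}(C_Y). Then f^{vTu}_{δ,F,E} = f^T_{δ,F,E} for every δ > 0 and all entourages F ∈ 𝓔^Y and E ∈ 𝓔^X. -/
noncomputable section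

open scoped ENNReal

variable {X Y Z : Type}
variable {H₀ H₁ H₂ H₃ : Type}

/-! Projections onto measurable sets have support in `E_disc ∘ E_disc`, so they are approximable
and central unitaries commute with them. Hence `1_B (v T u) 1_A = v (1_B T 1_A) u`, which has
the same norm as `1_B T 1_A`. -/

theorem LFCMSpace.inter_mem {X : Type} (𝒳 : LFCMSpace X) {A B : Set X}
    (hA : A ∈ 𝒳.meas) (hB : B ∈ 𝒳.meas) : A ∩ B ∈ 𝒳.meas := by
  simpa [Set.compl_union] using
    𝒳.compl_mem (𝒳.union_mem (𝒳.compl_mem hA) (𝒳.compl_mem hB))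

theorem HasControlledPropagation.approximable [NormedAddCommGroup H₁] [InnerProductSpace ℂ H₁]
    [NormedAddCommGroup H₂] [InnerProductSpace ℂ H₂]
    {𝒳 : LFCMSpace X} {pX : Set X → (H₁ →L[ℂ] H₁)} {pY : Set X → (H₂ →L[ℂ] H₂)}
    {t : H₁ →L[ℂ] H₂} (ht : HasControlledPropagation 𝒳 pX pY t) : Approximable 𝒳 pX pY t :=
  fun _ hε => ⟨t, ht, by simpa using hε.le⟩

namespace CoarseModule

variable {H : Type} [NormedAddCommGroup H] [InnerProductSpace ℂ H] [CompleteSpace H]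
  {𝒳 : LFCMSpace X} (M : CoarseModule 𝒳 H) {A : Set X}

theorem opSupp_proj_subset (hA : A ∈ 𝒳.meas) :
    opSupp 𝒳 𝒳 M.proj M.proj (M.proj A) ⊆ RelComp 𝒳.disc 𝒳.disc := by
  rintro ⟨y, x⟩ ⟨_, ⟨B, A', rfl, hB, hBdisc, hA', hA'disc, hne⟩, hyB, hxA'⟩
  have hcomp : M.proj B ∘L M.proj A ∘L M.proj A' = M.proj (B ∩ (A ∩ A')) := by
    rw [M.proj_inter hB (𝒳.inter_mem hA hA'), M.proj_inter hA hA']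
  obtain ⟨z, hzB, -, hzA'⟩ : (B ∩ (A ∩ A')).Nonempty := by
    rw [Set.nonempty_iff_ne_empty]
    rintro h
    exact hne (by rw [hcomp, h, M.proj_empty])
  exact ⟨z, hBdisc ⟨hyB, hzB⟩, hA'disc ⟨hzA', hxA'⟩⟩

theorem approximable_proj (hA : A ∈ 𝒳.meas) : Approximable 𝒳 M.proj M.proj (M.proj A) :=
  HasControlledPropagation.approximable <| 𝒳.coarse.mem_of_subset
    (𝒳.coarse.comp_mem 𝒳.disc_mem 𝒳.disc_mem) (M.opSupp_proj_subset hA)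

end CoarseModule

theorem IsCentralUnitary.comp_proj {H : Type} [NormedAddCommGroup H] [InnerProductSpace ℂ H]
    [CompleteSpace H] {𝒳 : LFCMSpace X} {M : CoarseModule 𝒳 H} {u : H →L[ℂ] H}
    (hu : IsCentralUnitary 𝒳 M u) {A : Set X} (hA : A ∈ 𝒳.meas) :
    u ∘L M.proj A = M.proj A ∘L u :=
  hu.2.2 _ (M.approximable_proj hA)

theorem IsUnitaryOp.mem_unitary {H : Type} [NormedAddCommGroup H] [InnerProductSpace ℂ H]
    [CompleteSpace H] {u : H →L[ℂ] H} (hu : IsUnitaryOp u) : u ∈ unitary (H →L[ℂ] H) :=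
  hu

theorem IsUnitaryOp.norm_comp_comp [NormedAddCommGroup H₁] [InnerProductSpace ℂ H₁]
    [CompleteSpace H₁] [NormedAddCommGroup H₂] [InnerProductSpace ℂ H₂] [CompleteSpace H₂]
    {u : H₁ →L[ℂ] H₁} {v : H₂ →L[ℂ] H₂} (hu : IsUnitaryOp u) (hv : IsUnitaryOp v)
    (s : H₁ →L[ℂ] H₂) : ‖v ∘L s ∘L u‖ = ‖s‖ := by
  change ‖(Unitary.linearIsometryEquiv ⟨v, hv.mem_unitary⟩ : H₂ →L[ℂ] H₂) ∘L s ∘L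
    (Unitary.linearIsometryEquiv ⟨u, hu.mem_unitary⟩ : H₁ →L[ℂ] H₁)‖ = ‖s‖
  rw [ContinuousLinearMap.opNorm_linearIsometryEquiv_comp,
    ContinuousLinearMap.opNorm_comp_linearIsometryEquiv]

theorem approxRel_congr [NormedAddCommGroup H₁] [InnerProductSpace ℂ H₁]
    [NormedAddCommGroup H₂] [InnerProductSpace ℂ H₂]
    (𝒳 : LFCMSpace X) (𝒴 : LFCMSpace Y)
    (pX : Set X → (H₁ →L[ℂ] H₁)) (pY : Set Y → (H₂ →L[ℂ] H₂)) {T T' : H₁ →L[ℂ] H₂}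
    (h : ∀ B ∈ 𝒴.meas, ∀ A ∈ 𝒳.meas, ‖pY B ∘L T ∘L pX A‖ = ‖pY B ∘L T' ∘L pX A‖)
    (δ : ℝ) (F : Set (Y × Y)) (E : Set (X × X)) :
    approxRel 𝒳 𝒴 pX pY T δ F E = approxRel 𝒳 𝒴 pX pY T' δ F E := by
  unfold approxRel
  congr 1
  ext S
  refine exists_congr fun B => exists_congr fun A => ?_
  constructor <;> rintro ⟨rfl, hB, hBF, hA, hAE, hδ⟩ <;>
    exact ⟨rfl, hB, hBF, hA, hAE, by simpa only [h B hB A hA] using hδ⟩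

theorem approxRel_central_unitaries_general {X Y : Type} {H₁ H₂ : Type}
    [NormedAddCommGroup H₁] [InnerProductSpace ℂ H₁] [CompleteSpace H₁]
    [NormedAddCommGroup H₂] [InnerProductSpace ℂ H₂] [CompleteSpace H₂]
    (𝒳 : LFCMSpace X) (𝒴 : LFCMSpace Y)
    (CX : CoarseModule 𝒳 H₁) (CY : CoarseModule 𝒴 H₂)
    (T : H₁ →L[ℂ] H₂)
    (u : H₁ →L[ℂ] H₁) (hu : IsCentralUnitary 𝒳 CX u)
    (v : H₂ →L[ℂ] H₂) (hv : IsCentralUnitary 𝒴 CY v)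
    (δ : ℝ)
    (F : Set (Y × Y))
    (E : Set (X × X)) :
    approxRel 𝒳 𝒴 CX.proj CY.proj (v ∘L T ∘L u) δ F E
      = approxRel 𝒳 𝒴 CX.proj CY.proj T δ F E := by
  refine approxRel_congr 𝒳 𝒴 CX.proj CY.proj (fun B hB A hA => ?_) δ F E
  have hcomm : CY.proj B ∘L (v ∘L T ∘L u) ∘L CX.proj A
      = v ∘L (CY.proj B ∘L T ∘L CX.proj A) ∘L u := by
    simp only [← ContinuousLinearMap.comp_assoc, hv.comp_proj hB]
    simp only [ContinuousLinearMap.comp_assoc, hu.comp_proj hA]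
  rw [hcomm, hu.2.1.norm_comp_comp hv.2.1]

/-- Approximate relations are unchanged by pre- and post-composition with
central unitaries. -/
theorem approxRel_central_unitaries {X Y : Type} {H₁ H₂ : Type}
    [NormedAddCommGroup H₁] [InnerProductSpace ℂ H₁] [CompleteSpace H₁]
    [NormedAddCommGroup H₂] [InnerProductSpace ℂ H₂] [CompleteSpace H₂]
    (𝒳 : LFCMSpace X) (𝒴 : LFCMSpace Y)
    (CX : CoarseModule 𝒳 H₁) (hCX : IsFaithfulMod 𝒳 CX) (CY : CoarseModule 𝒴 H₂)
    (T : H₁ →L[ℂ] H₂)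
    (u : H₁ →L[ℂ] H₁) (hu : IsCentralUnitary 𝒳 CX u)
    (v : H₂ →L[ℂ] H₂) (hv : IsCentralUnitary 𝒴 CY v)
    (δ : ℝ) (hδ : 0 < δ)
    (F : Set (Y × Y)) (hF : F ∈ 𝒴.coarse.entourages)
    (E : Set (X × X)) (hE : E ∈ 𝒳.coarse.entourages) :
    approxRel 𝒳 𝒴 CX.proj CY.proj (v ∘L T ∘L u) δ F E
      = approxRel 𝒳 𝒴 CX.proj CY.proj T δ F E :=
  approxRel_central_unitaries_general 𝒳 𝒴 CX CY T u hu v hv δ F E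
end
end

section
/- Let 𝒳 and 𝒴 be LFCM spaces, F : 𝒜(𝒳) → 𝒜(𝒴) a full and faithful *-functor, and C, D coarse 𝒳-modules. Suppose that for each M ∈ {C, D, C⊕D} there is a unitary U(M) : H_M → H_{F(M)} implementing the *-isomorphism End_{𝒜(𝒳)}(M) → End_{𝒜(𝒴)}(F(M)) induced by F. Let α_{C,D} = F(i_C) π_{F(C)} + F(i_D) π_{F(D)} : F(C) ⊕ F(D) → F(C ⊕ D) be the additivity isomorphism of F. Then there exist central unitaries u ∈ End_{𝒜(𝒳)}(C) and v ∈ End_{𝒜(𝒳)}(D) such that α_{C,D} = U(C⊕D) (u ⊕ v) (U(C) ⊕ U(D))*. -/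
noncomputable section

open scoped ENNReal

variable {X Y Z : Type}
variable {H₀ H₁ H₂ H₃ : Type}

/-!
Let `J : K → N` be either summand inclusion: an isometry commuting with the projections. Since
`F` is a *-functor implemented by `U(K)` and `U(N)`, the isometry `s = U(N)* F(J) U(K)` satisfies
`s t s* = J t J*` for every approximable `t`. For `t = 1` this says that `s` and `J` have the same
range, so `u = J* s` is a unitary with `J u = s`, and `u t u* = t` makes it central. Then
`F(J) = U(N) J u U(K)*`, and summing over the two inclusions gives the formula for `α_{C,D}`.
-/

open ContinuousLinearMap

section DirectSumOps

variable [NormedAddCommGroup H₀] [InnerProductSpace ℂ H₀]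
    [NormedAddCommGroup H₁] [InnerProductSpace ℂ H₁]
    [NormedAddCommGroup H₂] [InnerProductSpace ℂ H₂]
    [NormedAddCommGroup H₃] [InnerProductSpace ℂ H₃]

theorem fstOp_comp_inlOp : fstOp H₀ H₁ ∘L inlOp H₀ H₁ = ContinuousLinearMap.id ℂ H₀ := by
  ext x; simp [fstOp, inlOp]

theorem sndOp_comp_inrOp : sndOp H₀ H₁ ∘L inrOp H₀ H₁ = ContinuousLinearMap.id ℂ H₁ := by
  ext x; simp [sndOp, inrOp]

theorem prodOp_eq_add (T : H₀ →L[ℂ] H₂) (S : H₁ →L[ℂ] H₃) :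
    prodOp T S = inlOp H₂ H₃ ∘L T ∘L fstOp H₀ H₁ + inrOp H₂ H₃ ∘L S ∘L sndOp H₀ H₁ := by
  ext x; simp [prodOp, inlOp, inrOp, fstOp, sndOp, ← WithLp.toLp_add, Prod.map]

theorem prodOp_comp_prodOp {H₄ H₅ : Type}
    [NormedAddCommGroup H₄] [InnerProductSpace ℂ H₄]
    [NormedAddCommGroup H₅] [InnerProductSpace ℂ H₅]
    (T : H₂ →L[ℂ] H₄) (S : H₃ →L[ℂ] H₅) (T' : H₀ →L[ℂ] H₂) (S' : H₁ →L[ℂ] H₃) :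
    prodOp T S ∘L prodOp T' S' = prodOp (T ∘L T') (S ∘L S') := by
  ext x; simp [prodOp, Prod.map]

variable [CompleteSpace H₀] [CompleteSpace H₁]

theorem adjoint_inlOp : adjoint (inlOp H₀ H₁) = fstOp H₀ H₁ :=
  ((eq_adjoint_iff _ _).2 fun x y => by simp [fstOp, inlOp, WithLp.prod_inner_apply]).symm

theorem adjoint_inrOp : adjoint (inrOp H₀ H₁) = sndOp H₀ H₁ :=
  ((eq_adjoint_iff _ _).2 fun x y => by simp [sndOp, inrOp, WithLp.prod_inner_apply]).symm

theorem adjoint_fstOp : adjoint (fstOp H₀ H₁) = inlOp H₀ H₁ := by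
  rw [← adjoint_inlOp, adjoint_adjoint]

theorem adjoint_sndOp : adjoint (sndOp H₀ H₁) = inrOp H₀ H₁ := by
  rw [← adjoint_inrOp, adjoint_adjoint]

theorem adjoint_prodOp [CompleteSpace H₂] [CompleteSpace H₃]
    (T : H₀ →L[ℂ] H₂) (S : H₁ →L[ℂ] H₃) :
    adjoint (prodOp T S) = prodOp (adjoint T) (adjoint S) := by
  simp only [prodOp_eq_add, map_add, adjoint_comp, adjoint_inlOp, adjoint_inrOp, adjoint_fstOp,
    adjoint_sndOp, comp_assoc]

end DirectSumOps

section DirectSumModules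

variable {𝒳 : LFCMSpace X}
    [NormedAddCommGroup H₀] [InnerProductSpace ℂ H₀] [CompleteSpace H₀]
    [NormedAddCommGroup H₁] [InnerProductSpace ℂ H₁] [CompleteSpace H₁]
    {C₀ : CoarseModule 𝒳 H₀} {C₁ : CoarseModule 𝒳 H₁} {M : CoarseModule 𝒳 (WithLp 2 (H₀ × H₁))}

theorem IsDirectSum.proj_comp_inlOp (hM : IsDirectSum 𝒳 C₀ C₁ M) (A : Set X) :
    M.proj A ∘L inlOp H₀ H₁ = inlOp H₀ H₁ ∘L C₀.proj A := by
  rw [hM A, prodOp_comp_inlOp]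

theorem IsDirectSum.proj_comp_inrOp (hM : IsDirectSum 𝒳 C₀ C₁ M) (A : Set X) :
    M.proj A ∘L inrOp H₀ H₁ = inrOp H₀ H₁ ∘L C₁.proj A := by
  rw [hM A, prodOp_comp_inrOp]

end DirectSumModules

section Approximability

variable {𝒳 : LFCMSpace X}
    [NormedAddCommGroup H₁] [InnerProductSpace ℂ H₁]
    [NormedAddCommGroup H₂] [InnerProductSpace ℂ H₂]
    [NormedAddCommGroup H₃] [InnerProductSpace ℂ H₃]
    {p₁ : Set X → (H₁ →L[ℂ] H₁)} {p₂ : Set X → (H₂ →L[ℂ] H₂)} {p₃ : Set X → (H₃ →L[ℂ] H₃)}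

theorem approximable_iff_mem_closure {t : H₁ →L[ℂ] H₂} :
    Approximable 𝒳 p₁ p₂ t ↔ t ∈ closure {s | HasControlledPropagation 𝒳 p₁ p₂ s} := by
  rw [Metric.mem_closure_iff]
  constructor
  · intro h ε hε
    obtain ⟨s, hs, hts⟩ := h (ε / 2) (half_pos hε)
    exact ⟨s, hs, by rw [dist_eq_norm]; linarith⟩
  · intro h ε hε
    obtain ⟨s, hs, hts⟩ := h ε hε
    exact ⟨s, hs, (dist_eq_norm t s ▸ hts).le⟩

theorem HasControlledPropagation.comp_left {J : H₂ →L[ℂ] H₃}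
    (hJ : ∀ A ∈ 𝒳.meas, p₃ A ∘L J = J ∘L p₂ A) {s : H₁ →L[ℂ] H₂}
    (hs : HasControlledPropagation 𝒳 p₁ p₂ s) : HasControlledPropagation 𝒳 p₁ p₃ (J ∘L s) := by
  refine 𝒳.coarse.mem_of_subset hs (Set.sUnion_subset_sUnion ?_)
  rintro S ⟨B, A, rfl, hBm, hBd, hAm, hAd, hne⟩
  refine ⟨B, A, rfl, hBm, hBd, hAm, hAd, fun h0 => hne ?_⟩
  rw [← comp_assoc, ← comp_assoc, hJ B hBm, comp_assoc, comp_assoc, h0, comp_zero]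

theorem HasControlledPropagation.comp_right {J : H₃ →L[ℂ] H₁}
    (hJ : ∀ A ∈ 𝒳.meas, p₁ A ∘L J = J ∘L p₃ A) {s : H₁ →L[ℂ] H₂}
    (hs : HasControlledPropagation 𝒳 p₁ p₂ s) : HasControlledPropagation 𝒳 p₃ p₂ (s ∘L J) := by
  refine 𝒳.coarse.mem_of_subset hs (Set.sUnion_subset_sUnion ?_)
  rintro S ⟨B, A, rfl, hBm, hBd, hAm, hAd, hne⟩
  refine ⟨B, A, rfl, hBm, hBd, hAm, hAd, fun h0 => hne ?_⟩
  rw [comp_assoc, ← hJ A hAm, ← comp_assoc, ← comp_assoc, comp_assoc _ s, h0, zero_comp]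

theorem Approximable.comp_left {J : H₂ →L[ℂ] H₃}
    (hJ : ∀ A ∈ 𝒳.meas, p₃ A ∘L J = J ∘L p₂ A) {t : H₁ →L[ℂ] H₂}
    (ht : Approximable 𝒳 p₁ p₂ t) : Approximable 𝒳 p₁ p₃ (J ∘L t) := by
  rw [approximable_iff_mem_closure] at ht ⊢
  exact map_mem_closure (f := fun s => J ∘L s) (by fun_prop) ht
    fun _ hs => HasControlledPropagation.comp_left hJ hs

theorem Approximable.comp_right {J : H₃ →L[ℂ] H₁}
    (hJ : ∀ A ∈ 𝒳.meas, p₁ A ∘L J = J ∘L p₃ A) {t : H₁ →L[ℂ] H₂}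
    (ht : Approximable 𝒳 p₁ p₂ t) : Approximable 𝒳 p₃ p₂ (t ∘L J) := by
  rw [approximable_iff_mem_closure] at ht ⊢
  exact map_mem_closure (f := fun s => s ∘L J) (by fun_prop) ht
    fun _ hs => HasControlledPropagation.comp_right hJ hs

variable [CompleteSpace H₁]

theorem approximable_of_commute {C : CoarseModule 𝒳 H₁} {u : H₁ →L[ℂ] H₁}
    (hu : ∀ A ∈ 𝒳.meas, u ∘L C.proj A = C.proj A ∘L u) :
    Approximable 𝒳 C.proj C.proj u := by
  intro ε hε
  refine ⟨u, ?_, by simp [hε.le]⟩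
  refine 𝒳.coarse.mem_of_subset (𝒳.coarse.comp_mem 𝒳.disc_mem 𝒳.disc_mem) ?_
  rintro ⟨y, x⟩ ⟨_, ⟨B, A, rfl, hBm, hBd, hAm, hAd, hne⟩, hyB, hxA⟩
  obtain ⟨z, hzB, hzA⟩ : (B ∩ A).Nonempty := by
    refine Set.nonempty_iff_ne_empty.2 fun h => hne ?_
    rw [hu A hAm, ← comp_assoc, ← C.proj_inter hBm hAm, h, C.proj_empty, zero_comp]
  exact ⟨z, hBd ⟨hyB, hzB⟩, hAd ⟨hzA, hxA⟩⟩

theorem approximable_id (C : CoarseModule 𝒳 H₁) :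
    Approximable 𝒳 C.proj C.proj (ContinuousLinearMap.id ℂ H₁) :=
  approximable_of_commute fun _ _ => by rw [id_comp, comp_id]

theorem approximable_proj (C : CoarseModule 𝒳 H₁) {A : Set X} (hA : A ∈ 𝒳.meas) :
    Approximable 𝒳 C.proj C.proj (C.proj A) :=
  approximable_of_commute fun B hB => by
    rw [← C.proj_inter hA hB, ← C.proj_inter hB hA, Set.inter_comm]

variable [CompleteSpace H₂]

theorem CoarseModule.proj_comp_adjoint_of_proj_comp {C : CoarseModule 𝒳 H₁}
    {D : CoarseModule 𝒳 H₂} {J : H₁ →L[ℂ] H₂}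
    (hJ : ∀ A ∈ 𝒳.meas, D.proj A ∘L J = J ∘L C.proj A) :
    ∀ A ∈ 𝒳.meas, C.proj A ∘L adjoint J = adjoint J ∘L D.proj A := by
  intro A hA
  have h := congrArg adjoint (hJ A hA)
  rwa [adjoint_comp, adjoint_comp, (C.proj_selfAdjoint A hA).adjoint_eq,
    (D.proj_selfAdjoint A hA).adjoint_eq, eq_comm] at h

theorem approximable_adjoint_of_proj_comp {C : CoarseModule 𝒳 H₁} {D : CoarseModule 𝒳 H₂}
    {J : H₁ →L[ℂ] H₂}
    (hJ : ∀ A ∈ 𝒳.meas, D.proj A ∘L J = J ∘L C.proj A) :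
    Approximable 𝒳 D.proj C.proj (adjoint J) := by
  simpa only [id_comp] using
    (approximable_id C).comp_right (CoarseModule.proj_comp_adjoint_of_proj_comp hJ)

end Approximability

section Isometries

variable [NormedAddCommGroup H₁] [InnerProductSpace ℂ H₁] [CompleteSpace H₁]
    [NormedAddCommGroup H₂] [InnerProductSpace ℂ H₂] [CompleteSpace H₂] {J s : H₁ →L[ℂ] H₂}

theorem comp_adjoint_comp_of_comp_adjoint_eq (hs : adjoint s ∘L s = ContinuousLinearMap.id ℂ H₁)
    (hJs : s ∘L adjoint s = J ∘L adjoint J) : J ∘L (adjoint J ∘L s) = s := by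
  rw [← comp_assoc, ← hJs, comp_assoc, hs, comp_id]

theorem isUnitaryOp_adjoint_comp (hJ : adjoint J ∘L J = ContinuousLinearMap.id ℂ H₁)
    (hs : adjoint s ∘L s = ContinuousLinearMap.id ℂ H₁) (hJs : s ∘L adjoint s = J ∘L adjoint J) :
    IsUnitaryOp (adjoint J ∘L s) := by
  constructor
  · rw [adjoint_comp, adjoint_adjoint, comp_assoc, comp_adjoint_comp_of_comp_adjoint_eq hs hJs, hs]
  · rw [adjoint_comp, adjoint_adjoint, comp_assoc, ← comp_assoc s, hJs, ← comp_assoc,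
      ← comp_assoc, hJ, id_comp, hJ]

theorem adjoint_comp_commute (hJ : adjoint J ∘L J = ContinuousLinearMap.id ℂ H₁)
    (hs : adjoint s ∘L s = ContinuousLinearMap.id ℂ H₁) {t : H₁ →L[ℂ] H₁}
    (ht : s ∘L t ∘L adjoint s = J ∘L t ∘L adjoint J) :
    (adjoint J ∘L s) ∘L t = t ∘L (adjoint J ∘L s) := by
  calc (adjoint J ∘L s) ∘L t = adjoint J ∘L (s ∘L t ∘L adjoint s) ∘L s := by
        simp only [comp_assoc, hs, comp_id]
    _ = t ∘L (adjoint J ∘L s) := by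
        rw [ht]; simp only [← comp_assoc, hJ, id_comp]

end Isometries

namespace StarFunctor

variable {𝒳 : LFCMSpace X} {𝒴 : LFCMSpace Y}

theorem Implements.map_comp_eq {F : StarFunctor 𝒳 𝒴} {C : BundledModule 𝒳}
    {U : C.H →L[ℂ] (F.obj C).H} (hU : F.Implements C U) {t : C.H →L[ℂ] C.H}
    (ht : Approximable 𝒳 C.mod.proj C.mod.proj t) : F.map t ht ∘L U = U ∘L t := by
  rw [hU.2 t ht, comp_assoc, comp_assoc, hU.1.1, comp_id]

variable (F : StarFunctor 𝒳 𝒴) {K N : BundledModule 𝒳} {J : K.H →L[ℂ] N.H}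
    (hJ : Approximable 𝒳 K.mod.proj N.mod.proj J)

theorem map_adjoint_comp_map (hJ' : Approximable 𝒳 N.mod.proj K.mod.proj (adjoint J))
    (hJJ : adjoint J ∘L J = ContinuousLinearMap.id ℂ K.H) :
    F.map (adjoint J) hJ' ∘L F.map J hJ = ContinuousLinearMap.id ℂ (F.obj K).H := by
  have h : Approximable 𝒳 K.mod.proj K.mod.proj (adjoint J ∘L J) :=
    hJJ ▸ approximable_id K.mod
  rw [← F.map_comp J (adjoint J) hJ hJ' h]
  simp only [hJJ, F.map_id]

variable {UK : K.H →L[ℂ] (F.obj K).H} {UN : N.H →L[ℂ] (F.obj N).H}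

theorem adjoint_comp_map_isometry (hUK : F.Implements K UK) (hUN : F.Implements N UN)
    (hJ' : Approximable 𝒳 N.mod.proj K.mod.proj (adjoint J))
    (hJJ : adjoint J ∘L J = ContinuousLinearMap.id ℂ K.H) :
    adjoint (adjoint UN ∘L F.map J hJ ∘L UK) ∘L (adjoint UN ∘L F.map J hJ ∘L UK)
      = ContinuousLinearMap.id ℂ K.H := by
  rw [adjoint_comp, adjoint_comp, adjoint_adjoint, ← F.map_star J hJ hJ']
  simp only [comp_assoc]
  rw [← comp_assoc UN, hUN.1.2, id_comp, ← comp_assoc (F.map _ hJ'),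
    F.map_adjoint_comp_map hJ hJ' hJJ, id_comp, hUK.1.1]

theorem adjoint_comp_map_conj (hUK : F.Implements K UK) (hUN : F.Implements N UN)
    (hJN : ∀ A ∈ 𝒳.meas, N.mod.proj A ∘L J = J ∘L K.mod.proj A) {t : K.H →L[ℂ] K.H}
    (ht : Approximable 𝒳 K.mod.proj K.mod.proj t) :
    (adjoint UN ∘L F.map J hJ ∘L UK) ∘L t ∘L adjoint (adjoint UN ∘L F.map J hJ ∘L UK)
      = J ∘L t ∘L adjoint J := by
  have hJ' := approximable_adjoint_of_proj_comp hJN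
  have htJ' : Approximable 𝒳 N.mod.proj K.mod.proj (t ∘L adjoint J) :=
    ht.comp_right (CoarseModule.proj_comp_adjoint_of_proj_comp hJN)
  have hJtJ' : Approximable 𝒳 N.mod.proj N.mod.proj (J ∘L t ∘L adjoint J) := htJ'.comp_left hJN
  calc _ = adjoint UN ∘L F.map (J ∘L t ∘L adjoint J) hJtJ' ∘L UN := by
        rw [adjoint_comp, adjoint_comp, adjoint_adjoint, ← F.map_star J hJ hJ',
          F.map_comp _ _ htJ' hJ hJtJ', F.map_comp _ _ hJ' ht htJ', hUK.2 t ht]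
        simp only [comp_assoc]
    _ = J ∘L t ∘L adjoint J := by rw [hUN.map_comp_eq, ← comp_assoc, hUN.1.1, id_comp]

theorem exists_isCentralUnitary_comp_eq_map (hUK : F.Implements K UK) (hUN : F.Implements N UN)
    (hJN : ∀ A ∈ 𝒳.meas, N.mod.proj A ∘L J = J ∘L K.mod.proj A)
    (hJJ : adjoint J ∘L J = ContinuousLinearMap.id ℂ K.H) :
    ∃ u : K.H →L[ℂ] K.H, IsCentralUnitary 𝒳 K.mod u ∧ UN ∘L J ∘L u ∘L adjoint UK = F.map J hJ := by
  set s := adjoint UN ∘L F.map J hJ ∘L UK with hs_def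
  have hs : adjoint s ∘L s = ContinuousLinearMap.id ℂ K.H :=
    F.adjoint_comp_map_isometry hJ hUK hUN (approximable_adjoint_of_proj_comp hJN) hJJ
  have hconj := fun t => F.adjoint_comp_map_conj hJ hUK hUN hJN (t := t)
  have hJs : s ∘L adjoint s = J ∘L adjoint J := by
    simpa only [id_comp] using hconj _ (approximable_id K.mod)
  have hcomm := fun t ht => adjoint_comp_commute hJJ hs (hconj t ht)
  have hu : IsCentralUnitary 𝒳 K.mod (adjoint J ∘L s) :=
    ⟨approximable_of_commute fun A hA => hcomm _ (approximable_proj K.mod hA),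
      isUnitaryOp_adjoint_comp hJJ hs hJs, hcomm⟩
  refine ⟨adjoint J ∘L s, hu, ?_⟩
  rw [← comp_assoc J, comp_adjoint_comp_of_comp_adjoint_eq hs hJs, hs_def]
  simp only [comp_assoc]
  rw [← comp_assoc UN, hUN.1.2, id_comp, hUK.1.2, comp_id]

end StarFunctor

theorem additivity_iso_obstruction_general {X Y : Type}
    (𝒳 : LFCMSpace X) (𝒴 : LFCMSpace Y)
    (F : StarFunctor 𝒳 𝒴)
    (C D : BundledModule 𝒳)
    (M : CoarseModule 𝒳 (WithLp 2 (C.H × D.H))) (hM : IsDirectSum 𝒳 C.mod D.mod M)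
    (UC : C.H →L[ℂ] (F.obj C).H) (hUC : F.Implements C UC)
    (UD : D.H →L[ℂ] (F.obj D).H) (hUD : F.Implements D UD)
    (US : WithLp 2 (C.H × D.H) →L[ℂ] (F.obj (BundledModule.ofModule M)).H)
    (hUS : F.Implements (BundledModule.ofModule M) US) :
    ∃ (u : C.H →L[ℂ] C.H) (v : D.H →L[ℂ] D.H),
      IsCentralUnitary 𝒳 C.mod u ∧ IsCentralUnitary 𝒳 D.mod v ∧
      F.map (inlOp C.H D.H) hM.approximable_inl ∘L fstOp (F.obj C).H (F.obj D).H
          + F.map (inrOp C.H D.H) hM.approximable_inr ∘L sndOp (F.obj C).H (F.obj D).H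
        = US ∘L prodOp u v ∘L ContinuousLinearMap.adjoint (prodOp UC UD) := by
  obtain ⟨u, hu, hinl⟩ := F.exists_isCentralUnitary_comp_eq_map hM.approximable_inl hUC hUS
    (fun A _ => hM.proj_comp_inlOp A) (by rw [adjoint_inlOp, fstOp_comp_inlOp])
  obtain ⟨v, hv, hinr⟩ := F.exists_isCentralUnitary_comp_eq_map hM.approximable_inr hUD hUS
    (fun A _ => hM.proj_comp_inrOp A) (by rw [adjoint_inrOp, sndOp_comp_inrOp])
  refine ⟨u, v, hu, hv, ?_⟩
  rw [← hinl, ← hinr, adjoint_prodOp, prodOp_comp_prodOp, prodOp_eq_add, comp_add]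
  simp only [comp_assoc]

/-- The additivity isomorphism of a full and faithful *-functor is the
implementing unitary of the direct sum, twisted by central unitaries:
`α_{C,D} = U(C⊕D) (u ⊕ v) (U(C) ⊕ U(D))*`. -/
theorem additivity_iso_obstruction {X Y : Type}
    (𝒳 : LFCMSpace X) (𝒴 : LFCMSpace Y)
    (F : StarFunctor 𝒳 𝒴) (hfull : F.Full) (hfaithful : F.Faithful)
    (C D : BundledModule 𝒳)
    (M : CoarseModule 𝒳 (WithLp 2 (C.H × D.H))) (hM : IsDirectSum 𝒳 C.mod D.mod M)
    (UC : C.H →L[ℂ] (F.obj C).H) (hUC : F.Implements C UC)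
    (UD : D.H →L[ℂ] (F.obj D).H) (hUD : F.Implements D UD)
    (US : WithLp 2 (C.H × D.H) →L[ℂ] (F.obj (BundledModule.ofModule M)).H)
    (hUS : F.Implements (BundledModule.ofModule M) US) :
    ∃ (u : C.H →L[ℂ] C.H) (v : D.H →L[ℂ] D.H),
      IsCentralUnitary 𝒳 C.mod u ∧ IsCentralUnitary 𝒳 D.mod v ∧
      F.map (inlOp C.H D.H) hM.approximable_inl ∘L fstOp (F.obj C).H (F.obj D).H
          + F.map (inrOp C.H D.H) hM.approximable_inr ∘L sndOp (F.obj C).H (F.obj D).H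
        = US ∘L prodOp u v ∘L ContinuousLinearMap.adjoint (prodOp UC UD) :=
  additivity_iso_obstruction_general 𝒳 𝒴 F C D M hM UC hUC UD hUD US hUS
end
end
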